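/- arXiv:math/0403431 — 5 statements merged into one kernel-verified Lean document; each statement's English description precedes it below -/
import Mathlib

section
/- Exactness of the semi-infinite fermionic Koszul complex: for every integer m ≥ 1, the complex ⋯ → 𝒟⊗F_{m+1} →(d) 𝒟⊗F_m →(d) 𝒟⊗F_{m−1} → ⋯ → 𝒟⊗F_0 → 0 is exact at 𝒟⊗F_m; that is, every v ∈ 𝒟⊗F_m with d(v) = 0 satisfies v = d(w) for some w ∈ 𝒟⊗F_{m+1}. -/
open scoped BigOperators

noncomputable section

/-- The ring `𝒟 = ℂ[t₁,t₃,t₅,…]`: variable `k : ℕ` stands for `t_{2k+1}`. -/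
abbrev Dring : Type := MvPolynomial ℕ ℂ

/-- The series `∑_{k≥1} t_{2k-1} z^{2k-1}/(2k-1)`. -/
def genX : PowerSeries Dring :=
  PowerSeries.mk fun n =>
    if n % 2 = 1 then ((n : ℂ)⁻¹) • (MvPolynomial.X ((n - 1) / 2) : Dring) else 0

/-- `T n` is the polynomial `T₋ₙ`, the `n`-th coefficient of `exp(genX) = ∑_j genX^j/j!`
(the sum may be truncated at `j = n` since `genX` has zero constant term). -/
def T (n : ℕ) : Dring :=
  ∑ j ∈ Finset.range (n + 1),
    ((j.factorial : ℂ)⁻¹) • (PowerSeries.coeff (R := Dring) n (genX ^ j))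

/-- Index of a basis vector of the fermionic Fock space: a pair `(R, S)` of finite
sets of modes; `k ∈ R` stands for the factor `b_{k+1}` and `k ∈ S` for `a_{k+1}`. -/
abbrev FockIdx : Type := Finset ℕ × Finset ℕ

/-- The full fermionic Fock space `⊕_m F_m`, with basis `FockIdx`. -/
abbrev Fock : Type := FockIdx →₀ ℂ

/-- `𝒟 ⊗ (⊕_m F_m)`, a free `𝒟`-module with basis `FockIdx`. -/
abbrev DFock : Type := FockIdx →₀ Dring

def charge (x : FockIdx) : ℤ := (x.1.card : ℤ) - x.2.card

def fsingle (x : FockIdx) : Fock := Finsupp.single x 1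

/-- `αₙ` (for `n = k+1`, `k : ℕ`): wedging with `a_{k+1}` with the Koszul sign `(-1)^{deg ξ}`. -/
def alpha (k : ℕ) : Fock →ₗ[ℂ] Fock :=
  Finsupp.lsum ℂ fun x => LinearMap.toSpanSingleton ℂ Fock
    (if k ∈ x.2 then 0 else
      (((-1 : ℂ) ^ x.1.card) * ((-1 : ℂ) ^ (x.2.filter (· < k)).card)) •
        fsingle (x.1, insert k x.2))

/-- `βₙ` (for `n = k+1`): contraction with `b_{k+1}*`, with Koszul signs. -/
def beta (k : ℕ) : Fock →ₗ[ℂ] Fock :=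
  Finsupp.lsum ℂ fun x => LinearMap.toSpanSingleton ℂ Fock
    (if k ∈ x.1 then ((-1 : ℂ) ^ (x.1.filter (· < k)).card) • fsingle (x.1.erase k, x.2)
     else 0)

/-- `ω = ∑_{n≥1} αₙ βₙ` (on each basis vector only finitely many terms are nonzero). -/
def omega : Fock →ₗ[ℂ] Fock :=
  Finsupp.lsum ℂ fun x => LinearMap.toSpanSingleton ℂ Fock
    (∑ k ∈ x.1, alpha k (beta k (fsingle x)))

/-- The charge-`m` Fock space `F_m ⊆ Fock`. -/
def FockC (m : ℤ) : Submodule ℂ Fock := Finsupp.supported ℂ ℂ {x | charge x = m}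

def dsingle (x : FockIdx) : DFock := Finsupp.single x 1

/-- `αₙ`, extended `𝒟`-linearly to `𝒟 ⊗ Fock`. -/
def dAlpha (k : ℕ) : DFock →ₗ[Dring] DFock :=
  Finsupp.lsum Dring fun x => LinearMap.toSpanSingleton Dring DFock
    (if k ∈ x.2 then 0 else
      (((-1 : Dring) ^ x.1.card) * ((-1 : Dring) ^ (x.2.filter (· < k)).card)) •
        dsingle (x.1, insert k x.2))

/-- `βₙ`, extended `𝒟`-linearly to `𝒟 ⊗ Fock`. -/
def dBeta (k : ℕ) : DFock →ₗ[Dring] DFock :=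
  Finsupp.lsum Dring fun x => LinearMap.toSpanSingleton Dring DFock
    (if k ∈ x.1 then ((-1 : Dring) ^ (x.1.filter (· < k)).card) • dsingle (x.1.erase k, x.2)
     else 0)

/-- `d = ∑_{n≥1} T₋₍₂ₙ₋₁₎ βₙ : 𝒟⊗F_m → 𝒟⊗F_{m-1}`. -/
def dOp : DFock →ₗ[Dring] DFock :=
  Finsupp.lsum Dring fun x => LinearMap.toSpanSingleton Dring DFock
    (∑ k ∈ x.1, T (2 * k + 1) • dBeta k (dsingle x))

/-- `ω = ∑_{n≥1} αₙ βₙ`, extended `𝒟`-linearly. -/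
def dOmega : DFock →ₗ[Dring] DFock :=
  Finsupp.lsum Dring fun x => LinearMap.toSpanSingleton Dring DFock
    (∑ k ∈ x.1, dAlpha k (dBeta k (dsingle x)))

/-- The charge-`m` part `𝒟 ⊗ F_m`, as a `𝒟`-submodule. -/
def DFockC (m : ℤ) : Submodule Dring DFock := Finsupp.supported Dring Dring {x | charge x = m}

/-!
Since `T₋₍₂ₖ₊₁₎ = t_{2k+1}/(2k+1) + (a polynomial in t₁, …, t_{2k-1})`, the substitution
`t_{2k+1} ↦ T₋₍₂ₖ₊₁₎` is a triangular automorphism of `𝒟`. Applied coefficientwise, it conjugates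
`d` to the Koszul differential `∑ₖ t_{2k+1} βₖ` of the sequence of variables. That differential is
contraction with the Euler vector field, so by Cartan's formula it anticommutes with the de Rham
differential `∑ₖ ∂/∂t_{2k+1} ⊗ (b_{k+1} ∧ ·)` to the weight operator (polynomial degree plus
number of `b`'s). The weight is positive in charge `≥ 1`, so the de Rham differential divided by
the weight is a contracting homotopy there.
-/

open MvPolynomial

namespace MvPolynomial

variable {R S σ : Type*} [CommSemiring R] [CommSemiring S] [Algebra R S]

theorem aeval_eq_aeval_of_mem_supported {f g : σ → S} {s : Set σ} {p : MvPolynomial σ R}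
    (hp : p ∈ supported R s) (hfg : ∀ i ∈ s, f i = g i) : aeval f p = aeval g p :=
  AlgHom.adjoin_le_equalizer (aeval f) (aeval g)
    (by rintro _ ⟨i, hi, rfl⟩; simp [hfg i hi]) hp

end MvPolynomial

section Triangular

variable {R : Type*} [CommRing R] (c : ℕ → Rˣ) (r : ℕ → MvPolynomial ℕ R)

/-- The inverse of the substitution `X k ↦ c k • X k + r k`, where `r k` only involves the
variables `X j` with `j < k`. -/
def triangularInv : ℕ → MvPolynomial ℕ R
  | k => (c k)⁻¹ • (X k - aeval (fun j => if _ : j < k then triangularInv j else 0) (r k))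

variable {c r}

theorem aeval_triangularInv_of_mem_supported (hr : ∀ k, r k ∈ supported R (Set.Iio k)) (k : ℕ) :
    aeval (triangularInv c r) (r k) =
      aeval (fun j => if _ : j < k then triangularInv c r j else 0) (r k) :=
  aeval_eq_aeval_of_mem_supported (hr k) fun j hj => by rw [dif_pos (show j < k from hj)]

theorem aeval_triangularInv_X_smul_add (hr : ∀ k, r k ∈ supported R (Set.Iio k)) (k : ℕ) :
    aeval (triangularInv c r) ((c k : R) • X k + r k) = X k := by
  rw [map_add, map_smul, aeval_X, aeval_triangularInv_of_mem_supported hr, triangularInv,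
    ← Units.smul_def, smul_inv_smul, sub_add_cancel]

theorem aeval_X_smul_add_triangularInv (hr : ∀ k, r k ∈ supported R (Set.Iio k)) (k : ℕ) :
    aeval (fun j => (c j : R) • X j + r j) (triangularInv c r k) = X k := by
  induction k using Nat.strong_induction_on with
  | _ k ih =>
    have hrk : aeval (fun j => (c j : R) • X j + r j)
        (aeval (fun j => if _ : j < k then triangularInv c r j else 0) (r k)) = r k := by
      rw [comp_aeval_apply]
      calc _ = aeval X (r k) := aeval_eq_aeval_of_mem_supported (hr k) fun j hj => by
              simp only [dif_pos (show j < k from hj), ih j hj]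
        _ = r k := aeval_X_left_apply _
    rw [triangularInv, Units.smul_def, map_smul, map_sub, aeval_X, hrk, add_sub_cancel_right,
      smul_smul, Units.inv_mul, one_smul]

theorem exists_algEquiv_of_triangular (hr : ∀ k, r k ∈ supported R (Set.Iio k)) :
    ∃ e : MvPolynomial ℕ R ≃ₐ[R] MvPolynomial ℕ R, ∀ k, e (X k) = (c k : R) • X k + r k :=
  ⟨AlgEquiv.ofAlgHom (aeval fun j => (c j : R) • X j + r j) (aeval (triangularInv c r))
    (algHom_ext fun k => by simpa using aeval_X_smul_add_triangularInv hr k)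
    (algHom_ext fun k => by simpa using aeval_triangularInv_X_smul_add hr k),
    fun k => aeval_X _ _⟩

end Triangular

theorem coeff_genX_mem_supported (n : ℕ) :
    PowerSeries.coeff n genX ∈ supported ℂ {i | 2 * i + 1 ≤ n} := by
  rw [genX, PowerSeries.coeff_mk]
  split_ifs
  · exact Subalgebra.smul_mem _ (X_mem_supported.mpr (by simp only [Set.mem_ofPred_eq]; omega)) _
  · exact Subalgebra.zero_mem _

theorem constantCoeff_genX : PowerSeries.constantCoeff genX = 0 := by
  simp [← PowerSeries.coeff_zero_eq_constantCoeff_apply, genX]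

theorem coeff_genX_pow_mem_supported (j n : ℕ) :
    PowerSeries.coeff n (genX ^ j) ∈ supported ℂ {i | 2 * i + 1 ≤ n} := by
  induction j generalizing n with
  | zero =>
    rw [pow_zero, PowerSeries.coeff_one]
    split_ifs
    exacts [Subalgebra.one_mem _, Subalgebra.zero_mem _]
  | succ j ih =>
    rw [pow_succ, PowerSeries.coeff_mul]
    refine Subalgebra.sum_mem _ fun p hp => Subalgebra.mul_mem _
      (supported_mono (fun i hi => ?_) (ih _)) (supported_mono (fun i hi => ?_)
        (coeff_genX_mem_supported _))
    all_goals
      simp only [Set.mem_ofPred_eq, Finset.HasAntidiagonal.mem_antidiagonal] at hi hp ⊢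
      omega

theorem coeff_genX_pow_mem_supported_of_ne_one {j : ℕ} (hj : j ≠ 1) (n : ℕ) :
    PowerSeries.coeff n (genX ^ j) ∈ supported ℂ {i | 2 * i + 1 < n} := by
  obtain _ | _ | j := j
  · rw [pow_zero, PowerSeries.coeff_one]
    split_ifs
    exacts [Subalgebra.one_mem _, Subalgebra.zero_mem _]
  · exact absurd rfl hj
  rw [pow_succ, PowerSeries.coeff_mul]
  refine Subalgebra.sum_mem _ fun p hp => ?_
  rw [Finset.HasAntidiagonal.mem_antidiagonal] at hp
  obtain h | h := Nat.eq_zero_or_pos p.1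
  · rw [h, PowerSeries.coeff_zero_eq_constantCoeff_apply, map_pow, constantCoeff_genX,
      zero_pow (Nat.succ_ne_zero _), zero_mul]
    exact Subalgebra.zero_mem _
  obtain h' | h' := Nat.eq_zero_or_pos p.2
  · rw [h', PowerSeries.coeff_zero_eq_constantCoeff_apply, constantCoeff_genX, mul_zero]
    exact Subalgebra.zero_mem _
  refine Subalgebra.mul_mem _ (supported_mono (fun i hi => ?_) (coeff_genX_pow_mem_supported _ _))
    (supported_mono (fun i hi => ?_) (coeff_genX_mem_supported _))
  all_goals
    simp only [Set.mem_ofPred_eq] at hi ⊢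
    omega

theorem T_sub_mem_supported (k : ℕ) :
    T (2 * k + 1) - ((2 * k + 1 : ℕ) : ℂ)⁻¹ • X k ∈ supported ℂ (Set.Iio k) := by
  have hlin : PowerSeries.coeff (2 * k + 1) (genX ^ 1) = ((2 * k + 1 : ℕ) : ℂ)⁻¹ • X k := by
    rw [pow_one, genX, PowerSeries.coeff_mk, if_pos (by omega), Nat.add_sub_cancel,
      Nat.mul_div_cancel_left _ two_pos]
  rw [T, ← Finset.add_sum_erase _ _ (Finset.mem_range.mpr (by omega : 1 < 2 * k + 1 + 1)), hlin,
    Nat.factorial_one, Nat.cast_one, inv_one, one_smul, add_sub_cancel_left]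
  refine Subalgebra.sum_mem _ fun j hj => Subalgebra.smul_mem _ ?_ _
  refine supported_mono (fun i hi => ?_)
    (coeff_genX_pow_mem_supported_of_ne_one (Finset.ne_of_mem_erase hj) _)
  simp only [Set.mem_ofPred_eq, Set.mem_Iio] at hi ⊢
  omega

theorem exists_algEquiv_X_eq_T :
    ∃ e : Dring ≃ₐ[ℂ] Dring, ∀ k, e (X k) = T (2 * k + 1) := by
  have hc : ∀ k, ((2 * k + 1 : ℕ) : ℂ)⁻¹ ≠ 0 := fun k =>
    inv_ne_zero (Nat.cast_ne_zero.mpr (by omega))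
  obtain ⟨e, he⟩ := exists_algEquiv_of_triangular (c := fun k => Units.mk0 _ (hc k))
    T_sub_mem_supported
  exact ⟨e, fun k => by rw [he, Units.val_mk0, add_sub_cancel]⟩

/-- The sign of moving `b_{k+1}` to the front of `b_R`. -/
def koszulSign (A : Type*) [Ring A] (k : ℕ) (R : Finset ℕ) : A :=
  (-1) ^ (R.filter (· < k)).card

section KoszulSign

variable {A : Type*} [Ring A]

theorem koszulSign_mul_self (k : ℕ) (R : Finset ℕ) : koszulSign A k R * koszulSign A k R = 1 := by
  rw [koszulSign, ← pow_add, ← two_mul, pow_mul, neg_one_sq, one_pow]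

theorem koszulSign_insert {k : ℕ} {R : Finset ℕ} (hk : k ∉ R) (l : ℕ) :
    koszulSign A l (insert k R) = (if k < l then -1 else 1) * koszulSign A l R := by
  rw [koszulSign, koszulSign, Finset.filter_insert]
  split_ifs with h
  · rw [Finset.card_insert_of_notMem (fun hmem => hk (Finset.mem_of_mem_filter _ hmem)), pow_succ,
      (Commute.neg_one_left _).eq]
  · rw [one_mul]

theorem koszulSign_erase {l : ℕ} {R : Finset ℕ} (hl : l ∈ R) (k : ℕ) :
    koszulSign A k (R.erase l) = (if l < k then -1 else 1) * koszulSign A k R := by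
  have hsq : ((if l < k then -1 else 1) * (if l < k then -1 else 1) : A) = 1 := by
    split_ifs <;> simp
  rw [← Finset.insert_erase hl, koszulSign_insert (Finset.notMem_erase l R), ← mul_assoc, hsq,
    one_mul, Finset.insert_erase hl]

theorem map_koszulSign {B F : Type*} [Ring B] [FunLike F A B] [RingHomClass F A B] (f : F)
    (k : ℕ) (R : Finset ℕ) : f (koszulSign A k R) = koszulSign B k R := by
  simp [koszulSign]

end KoszulSign

section KoszulDifferential

variable {A B : Type*} [CommRing A] [CommRing B]

/-- The Koszul differential `∑ₖ f k βₖ` of a sequence `f` on `A ⊗ Fock`. -/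
def koszulDiff (f : ℕ → A) : (FockIdx →₀ A) →ₗ[A] FockIdx →₀ A :=
  Finsupp.lsum A fun x => ∑ k ∈ x.1, (koszulSign A k x.1 * f k) • Finsupp.lsingle (x.1.erase k, x.2)

theorem koszulDiff_single (f : ℕ → A) (x : FockIdx) (a : A) :
    koszulDiff f (Finsupp.single x a) =
      ∑ k ∈ x.1, Finsupp.single (x.1.erase k, x.2) (koszulSign A k x.1 * f k * a) := by
  simp [koszulDiff, Finsupp.smul_single, mul_assoc]

theorem dOp_eq_koszulDiff : dOp = koszulDiff fun k => T (2 * k + 1) := by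
  refine Finsupp.lhom_ext fun x a => ?_
  simp only [dOp, koszulDiff_single, Finsupp.lsum_single, LinearMap.toSpanSingleton_apply,
    Finset.smul_sum, dBeta, dsingle, Finsupp.smul_single, koszulSign]
  refine Finset.sum_congr rfl fun k hk => ?_
  rw [if_pos hk, Finsupp.smul_single, Finsupp.smul_single, Finsupp.smul_single]
  congr 1
  simp only [smul_eq_mul]
  ring

theorem mapRange_koszulDiff (φ : A →+* B) (f : ℕ → A) (v : FockIdx →₀ A) :
    Finsupp.mapRange φ (map_zero φ) (koszulDiff f v) =
      koszulDiff (φ ∘ f) (Finsupp.mapRange φ (map_zero φ) v) := by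
  induction v using Finsupp.induction_linear with
  | zero => simp
  | add v w hv hw => simp only [map_add, Finsupp.mapRange_add (map_add φ), hv, hw]
  | single x a =>
    simp only [koszulDiff_single, Finsupp.mapRange_finsetSum, Finsupp.mapRange_single, map_mul,
      map_koszulSign, Function.comp_apply]

end KoszulDifferential

section KoszulHomotopy

variable (K : Type*) [Field K]

def basisVec (x : FockIdx) (μ : ℕ →₀ ℕ) : FockIdx →₀ MvPolynomial ℕ K :=
  Finsupp.single x (monomial μ 1)

def koszulWeight (x : FockIdx) (μ : ℕ →₀ ℕ) : ℕ := μ.degree + x.1.card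

/-- The de Rham differential `∑ₖ ∂/∂Xₖ ⊗ b_{k+1} ∧` on a basis vector. -/
def deRhamBasis (x : FockIdx) (μ : ℕ →₀ ℕ) : FockIdx →₀ MvPolynomial ℕ K :=
  ∑ k ∈ μ.support \ x.1,
    (koszulSign K k x.1 * μ k) • basisVec K (insert k x.1, x.2) (μ - Finsupp.single k 1)

def koszulHomotopy : (FockIdx →₀ MvPolynomial ℕ K) →ₗ[K] FockIdx →₀ MvPolynomial ℕ K :=
  Finsupp.lsum K fun x =>
    (basisMonomials ℕ K).constr K fun μ => (koszulWeight x μ : K)⁻¹ • deRhamBasis K x μ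

variable {K}

theorem koszulHomotopy_basisVec (x : FockIdx) (μ : ℕ →₀ ℕ) :
    koszulHomotopy K (basisVec K x μ) = (koszulWeight x μ : K)⁻¹ • deRhamBasis K x μ := by
  have hbasis : monomial μ (1 : K) = basisMonomials ℕ K μ := by rw [coe_basisMonomials]
  rw [basisVec, hbasis, koszulHomotopy, Finsupp.lsum_single, Module.Basis.constr_basis]

theorem koszulDiff_X_basisVec (x : FockIdx) (μ : ℕ →₀ ℕ) :
    koszulDiff X (basisVec K x μ) =
      ∑ k ∈ x.1, koszulSign K k x.1 • basisVec K (x.1.erase k, x.2) (μ + Finsupp.single k 1) := by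
  rw [basisVec, koszulDiff_single]
  refine Finset.sum_congr rfl fun k _ => ?_
  rw [basisVec, Finsupp.smul_single, smul_eq_C_mul, map_koszulSign, X, mul_assoc,
    monomial_mul, one_mul, add_comm]

theorem support_add_single_sdiff_erase {μ : ℕ →₀ ℕ} {l : ℕ} {R : Finset ℕ} (hl : l ∈ R) :
    (μ + Finsupp.single l 1).support \ R.erase l = insert l (μ.support \ R) := by
  ext k
  rcases eq_or_ne k l with rfl | hkl
  · simp [hl]
  · simp [hkl]

theorem koszulDiff_X_deRhamBasis (R S : Finset ℕ) (μ : ℕ →₀ ℕ) :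
    koszulDiff X (deRhamBasis K (R, S) μ) =
      (∑ k ∈ μ.support \ R, (μ k : K)) • basisVec K (R, S) μ +
      ∑ k ∈ μ.support \ R, ∑ l ∈ R,
        (koszulSign K k R * koszulSign K l R * μ k * (if k < l then -1 else 1)) •
          basisVec K (insert k (R.erase l), S) (μ + Finsupp.single l 1 - Finsupp.single k 1) := by
  rw [deRhamBasis, map_sum, Finset.sum_smul, ← Finset.sum_add_distrib]
  refine Finset.sum_congr rfl fun k hk => ?_
  obtain ⟨hkμ, hkR⟩ := Finset.mem_sdiff.mp hk
  have hle : Finsupp.single k 1 ≤ μ :=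
    Finsupp.single_le_iff.mpr (Nat.one_le_iff_ne_zero.mpr (Finsupp.mem_support_iff.mp hkμ))
  rw [LinearMap.map_smul_of_tower, koszulDiff_X_basisVec, Finset.sum_insert hkR, smul_add,
    Finset.smul_sum, koszulSign_insert hkR, if_neg (lt_irrefl k), one_mul, Finset.erase_insert hkR,
    tsub_add_cancel_of_le hle, smul_smul, mul_comm (koszulSign K k R), mul_assoc,
    koszulSign_mul_self, mul_one]
  congr 1
  refine Finset.sum_congr rfl fun l hl => ?_
  have hkl : k ≠ l := fun h => hkR (h ▸ hl)
  rw [koszulSign_insert hkR, Finset.erase_insert_of_ne hkl, tsub_add_eq_add_tsub hle, smul_smul]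
  congr 1
  ring

theorem sum_koszulSign_smul_deRhamBasis (R S : Finset ℕ) (μ : ℕ →₀ ℕ) :
    ∑ l ∈ R, koszulSign K l R • deRhamBasis K (R.erase l, S) (μ + Finsupp.single l 1) =
      (∑ l ∈ R, ((μ l : K) + 1)) • basisVec K (R, S) μ +
      ∑ l ∈ R, ∑ k ∈ μ.support \ R,
        (koszulSign K k R * koszulSign K l R * μ k * (if l < k then -1 else 1)) •
          basisVec K (insert k (R.erase l), S) (μ + Finsupp.single l 1 - Finsupp.single k 1) := by
  rw [Finset.sum_smul, ← Finset.sum_add_distrib]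
  refine Finset.sum_congr rfl fun l hl => ?_
  have hlR : l ∉ μ.support \ R := fun h => (Finset.mem_sdiff.mp h).2 hl
  rw [deRhamBasis, support_add_single_sdiff_erase hl, Finset.sum_insert hlR, smul_add,
    Finset.smul_sum, koszulSign_erase hl, if_neg (lt_irrefl l), one_mul, Finset.insert_erase hl,
    add_tsub_cancel_right, smul_smul, ← mul_assoc, koszulSign_mul_self, one_mul]
  congr 1
  · simp
  refine Finset.sum_congr rfl fun k hk => ?_
  have hkl : k ≠ l := fun h => (Finset.mem_sdiff.mp hk).2 (h ▸ hl)
  rw [koszulSign_erase hl, Finsupp.add_apply, Finsupp.single_eq_of_ne hkl, add_zero, smul_smul]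
  congr 1
  ring

theorem sum_sdiff_add_sum_add_one (μ : ℕ →₀ ℕ) (R : Finset ℕ) :
    ∑ k ∈ μ.support \ R, μ k + ∑ l ∈ R, (μ l + 1) = μ.degree + R.card := by
  rw [Finset.sum_add_distrib, ← add_assoc, ← Finset.sum_union Finset.sdiff_disjoint,
    Finset.sdiff_union_self_eq_union, Finsupp.degree_apply, Finset.card_eq_sum_ones]
  congr 1
  exact (Finset.sum_subset Finset.subset_union_left fun k _ hk =>
    Finsupp.notMem_support_iff.mp hk).symm

/-- Cartan's formula `ι_E d + d ι_E = L_E` for the Euler vector field `E = ∑ₖ Xₖ ∂/∂Xₖ`. -/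
theorem koszulDiff_X_deRhamBasis_add_sum (R S : Finset ℕ) (μ : ℕ →₀ ℕ) :
    koszulDiff X (deRhamBasis K (R, S) μ) +
      ∑ l ∈ R, koszulSign K l R • deRhamBasis K (R.erase l, S) (μ + Finsupp.single l 1) =
      (koszulWeight (R, S) μ : K) • basisVec K (R, S) μ := by
  rw [koszulDiff_X_deRhamBasis, sum_koszulSign_smul_deRhamBasis, add_add_add_comm, ← add_smul,
    Finset.sum_comm (s := R), ← Finset.sum_add_distrib]
  have hcross : ∀ k ∈ μ.support \ R, ∀ l ∈ R,
      ((if k < l then -1 else 1) + (if l < k then -1 else 1) : K) = 0 := by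
    intro k hk l hl
    have hkl : k ≠ l := fun h => (Finset.mem_sdiff.mp hk).2 (h ▸ hl)
    rcases hkl.lt_or_gt with h | h <;> simp [h, h.not_gt]
  rw [Finset.sum_eq_zero (s := μ.support \ R) (f := fun k => _ + _) fun k hk => by
      rw [← Finset.sum_add_distrib]
      exact Finset.sum_eq_zero fun l hl => by
        rw [← add_smul, ← mul_add, hcross k hk l hl, mul_zero, zero_smul],
    add_zero, koszulWeight, ← sum_sdiff_add_sum_add_one]
  push_cast
  rfl

theorem koszulWeight_erase_add_single {x : FockIdx} {k : ℕ} (hk : k ∈ x.1) (μ : ℕ →₀ ℕ) :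
    koszulWeight (x.1.erase k, x.2) (μ + Finsupp.single k 1) = koszulWeight x μ := by
  have hpos := Finset.card_pos.mpr ⟨k, hk⟩
  simp only [koszulWeight, map_add, Finsupp.degree_single, Finset.card_erase_of_mem hk]
  omega

theorem koszulDiff_X_koszulHomotopy_add_basisVec [CharZero K] {x : FockIdx} (hx : x.1.Nonempty)
    (μ : ℕ →₀ ℕ) :
    koszulDiff X (koszulHomotopy K (basisVec K x μ)) +
      koszulHomotopy K (koszulDiff X (basisVec K x μ)) = basisVec K x μ := by
  obtain ⟨R, S⟩ := x
  have hw : (koszulWeight (R, S) μ : K) ≠ 0 :=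
    Nat.cast_ne_zero.mpr (by have := hx.card_pos; rw [koszulWeight]; omega)
  have hterm : ∀ l ∈ R, koszulHomotopy K
      (koszulSign K l R • basisVec K (R.erase l, S) (μ + Finsupp.single l 1)) =
      (koszulWeight (R, S) μ : K)⁻¹ •
        koszulSign K l R • deRhamBasis K (R.erase l, S) (μ + Finsupp.single l 1) := by
    intro l hl
    rw [map_smul, koszulHomotopy_basisVec, koszulWeight_erase_add_single (x := (R, S)) hl,
      smul_comm]
  rw [koszulHomotopy_basisVec, LinearMap.map_smul_of_tower, koszulDiff_X_basisVec, map_sum,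
    Finset.sum_congr rfl hterm, ← Finset.smul_sum, ← smul_add, koszulDiff_X_deRhamBasis_add_sum,
    smul_smul, inv_mul_cancel₀ hw, one_smul]

theorem eq_sum_basisVec (v : FockIdx →₀ MvPolynomial ℕ K) :
    v = ∑ x ∈ v.support, ∑ μ ∈ (v x).support, coeff μ (v x) • basisVec K x μ := by
  conv_lhs => rw [← Finsupp.sum_single v]
  refine Finset.sum_congr rfl fun x _ => ?_
  conv_lhs => rw [← (v x).support_sum_monomial_coeff]
  rw [Finsupp.single_finsetSum]
  refine Finset.sum_congr rfl fun μ _ => ?_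
  rw [basisVec, Finsupp.smul_single, smul_monomial, smul_eq_mul, mul_one]

theorem koszulDiff_X_koszulHomotopy_add [CharZero K] (v : FockIdx →₀ MvPolynomial ℕ K)
    (hv : ∀ x ∈ v.support, x.1.Nonempty) :
    koszulDiff X (koszulHomotopy K v) + koszulHomotopy K (koszulDiff X v) = v := by
  let L := (koszulDiff X).restrictScalars K ∘ₗ koszulHomotopy K +
    koszulHomotopy K ∘ₗ (koszulDiff X).restrictScalars K
  change L v = v
  conv_lhs => rw [eq_sum_basisVec v]
  conv_rhs => rw [eq_sum_basisVec v]
  simp only [map_sum, map_smul]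
  exact Finset.sum_congr rfl fun x hx => Finset.sum_congr rfl fun μ _ =>
    congrArg _ (koszulDiff_X_koszulHomotopy_add_basisVec (hv x hx) μ)

theorem koszulHomotopy_mem_supported {m : ℤ} {v : FockIdx →₀ MvPolynomial ℕ K}
    (hv : v ∈ Finsupp.supported (MvPolynomial ℕ K) (MvPolynomial ℕ K) {x | charge x = m}) :
    koszulHomotopy K v ∈
      Finsupp.supported (MvPolynomial ℕ K) (MvPolynomial ℕ K) {x | charge x = m + 1} := by
  rw [eq_sum_basisVec v, map_sum]
  refine Submodule.sum_mem _ fun x hx => ?_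
  rw [map_sum]
  refine Submodule.sum_mem _ fun μ _ => ?_
  rw [map_smul, koszulHomotopy_basisVec, deRhamBasis]
  refine Submodule.smul_of_tower_mem _ _ <| Submodule.smul_of_tower_mem _ _ <|
    Submodule.sum_mem _ fun k hk => Submodule.smul_of_tower_mem _ _ <|
      Finsupp.single_mem_supported _ _ ?_
  have hxm : charge x = m := (Finsupp.mem_supported _ _).mp hv hx
  simp only [Set.mem_ofPred_eq, charge] at hxm ⊢
  rw [Finset.card_insert_of_notMem (Finset.mem_sdiff.mp hk).2]
  omega

theorem koszulDiff_X_exact [CharZero K] {m : ℤ} (hm : 1 ≤ m) {v : FockIdx →₀ MvPolynomial ℕ K}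
    (hv : v ∈ Finsupp.supported (MvPolynomial ℕ K) (MvPolynomial ℕ K) {x | charge x = m})
    (hdv : koszulDiff X v = 0) :
    ∃ w ∈ Finsupp.supported (MvPolynomial ℕ K) (MvPolynomial ℕ K) {x | charge x = m + 1},
      koszulDiff X w = v := by
  have hnonempty : ∀ x ∈ v.support, x.1.Nonempty := fun x hx => by
    have hxm : charge x = m := (Finsupp.mem_supported _ _).mp hv hx
    rw [charge] at hxm
    exact Finset.card_pos.mp (by omega)
  refine ⟨koszulHomotopy K v, koszulHomotopy_mem_supported hv, ?_⟩
  simpa [hdv] using koszulDiff_X_koszulHomotopy_add v hnonempty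

end KoszulHomotopy

/-- Exactness of the semi-infinite fermionic Koszul complex:
for every integer `m ≥ 1`, every `v ∈ 𝒟⊗F_m` with `d v = 0` is of the form
`v = d w` for some `w ∈ 𝒟⊗F_{m+1}`. -/
theorem koszul_exactness (m : ℤ) (hm : 1 ≤ m) :
    ∀ v ∈ DFockC m, dOp v = 0 → ∃ w ∈ DFockC (m + 1), dOp w = v := by
  obtain ⟨e, he⟩ := exists_algEquiv_X_eq_T
  let E : DFock ≃+ DFock := Finsupp.mapRange.addEquiv e.toAddEquiv
  have hconj : ∀ u, dOp (E u) = E (koszulDiff X u) := fun u => by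
    rw [dOp_eq_koszulDiff, ← funext he]
    exact (mapRange_koszulDiff e.toRingHom X u).symm
  have hsupp : ∀ u n, E u ∈ DFockC n ↔ u ∈ DFockC n := fun u n => by
    rw [DFockC, Finsupp.mem_supported, Finsupp.mem_supported, Finsupp.mapRange.addEquiv_apply,
      Finsupp.support_mapRange_of_injective _ _ e.toAddEquiv.injective]
  intro v hv hdv
  obtain ⟨w, hw, hdw⟩ := koszulDiff_X_exact hm (v := E.symm v) ((hsupp _ m).mp (by simpa using hv))
    (E.injective (by rw [← hconj, E.apply_symm_apply, hdv, map_zero]))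
  exact ⟨E w, (hsupp w _).mpr hw, by rw [hconj, hdw, E.apply_symm_apply]⟩

end
end

section
/- The minimal generators of the chiral space over the integrals of motion (even sector): let 𝔪 ⊂ 𝒟 be the ideal generated by all the variables t₁,t₃,t₅,…. For every integer m ≥ 0, the quotient A_m/𝔪A_m is isomorphic as a complex vector space to W_m. -/
open scoped BigOperators

noncomputable section

/-- The charge-`m` part `𝒟 ⊗ F_m`, as a `ℂ`-submodule of `𝒟 ⊗ Fock`. -/
def DFockCc (m : ℤ) : Submodule ℂ DFock := Finsupp.supported Dring ℂ {x | charge x = m}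

/-- The `ℂ`-subspace `d(𝒟⊗F_{m+1}) + ω(𝒟⊗F_{m+2})` of `𝒟⊗F_m`, so that
`A_m = (𝒟⊗F_m)/NA m` is the chiral space of local fields (even sector). -/
def NA (m : ℤ) : Submodule ℂ DFock :=
  Submodule.map (dOp.restrictScalars ℂ) (DFockCc (m + 1)) ⊔
    Submodule.map (dOmega.restrictScalars ℂ) (DFockCc (m + 2))

/-- The chiral space `A_m = (𝒟⊗F_m)/(d(𝒟⊗F_{m+1}) + ω(𝒟⊗F_{m+2}))` as a `ℂ`-vector
space, realized as the image of `𝒟⊗F_m` in `(𝒟⊗Fock)/NA m`. -/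
def Asub (m : ℤ) : Submodule ℂ (DFock ⧸ NA m) := Submodule.map (NA m).mkQ (DFockCc m)

/-- The space `W_m = F_m/ω(F_{m+2})`, realized as the image of `F_m` in the quotient of
`Fock` by `ω(F_{m+2})` (note `ω(F_{m+2}) ⊆ F_m`). -/
def Wsub (m : ℤ) : Submodule ℂ (Fock ⧸ Submodule.map omega (FockC (m + 2))) :=
  Submodule.map (Submodule.map omega (FockC (m + 2))).mkQ (FockC m)

/-- The ideal `𝔪 = (t₁, t₃, t₅, …) ⊆ 𝒟`. -/
def mIdeal : Ideal Dring := Ideal.span (Set.range (MvPolynomial.X : ℕ → Dring))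

/-- The `ℂ`-subspace of `𝒟⊗Fock` corresponding to `𝔪·(𝒟⊗F_m)`. -/
def mPart (m : ℤ) : Submodule ℂ DFock :=
  Submodule.span ℂ {z | ∃ c ∈ mIdeal, ∃ v ∈ DFockCc m, z = c • v}

/-- `A_m/𝔪A_m`, realized as the image of `𝒟⊗F_m` in the quotient of `𝒟⊗Fock` by
`d(𝒟⊗F_{m+1}) + ω(𝒟⊗F_{m+2}) + 𝔪·(𝒟⊗F_m)`. -/
def AmodM (m : ℤ) : Submodule ℂ (DFock ⧸ (NA m ⊔ mPart m)) :=
  Submodule.map (NA m ⊔ mPart m).mkQ (DFockCc m)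

/-!
Reduction modulo `𝔪`, i.e. evaluation at `t = 0`, sends `𝒟 ⊗ F` onto `F`. Since every `T₋ₙ`
with `n ≥ 1` has zero constant term, it kills the image of `d`, and since `α`, `β`, `ω` have
integer matrix coefficients, it intertwines the `𝒟`-linear `ω` with `ω` itself. Conversely, an
element of `𝒟 ⊗ F_m` whose reduction is `ω u` differs from `ω u ∈ ω(𝒟 ⊗ F_{m+2})` by an element
of `𝔪 (𝒟 ⊗ F_m)`. So the relations defining `A_m / 𝔪 A_m` are exactly the preimage of those
defining `W_m`.
-/

theorem Submodule.nonempty_map_mkQ_equiv_of_iff {R M N : Type*} [Ring R] [AddCommGroup M]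
    [Module R M] [AddCommGroup N] [Module R N] {S K : Submodule R M} {Q : Submodule R N}
    (p : M →ₗ[R] N) (h : ∀ v ∈ S, v ∈ K ↔ p v ∈ Q) :
    Nonempty (map K.mkQ S ≃ₗ[R] map Q.mkQ (map p S)) := by
  let g := K.mkQ ∘ₗ S.subtype
  let f := Q.mkQ ∘ₗ p ∘ₗ S.subtype
  have hker : LinearMap.ker g = LinearMap.ker f := by
    ext ⟨v, hv⟩
    simpa [g, f, Submodule.Quotient.mk_eq_zero] using h v hv
  have hg : LinearMap.range g = map K.mkQ S := by simp [g, LinearMap.range_comp]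
  have hf : LinearMap.range f = map Q.mkQ (map p S) := by simp [f, LinearMap.range_comp]
  exact ⟨(LinearEquiv.ofEq _ _ hg.symm).trans <| g.quotKerEquivRange.symm.trans <|
    (quotEquivOfEq _ _ hker).trans <| f.quotKerEquivRange.trans (LinearEquiv.ofEq _ _ hf)⟩

theorem MvPolynomial.mem_idealOfVars_iff {σ R : Type*} [CommSemiring R] {p : MvPolynomial σ R} :
    p ∈ idealOfVars σ R ↔ constantCoeff p = 0 := by
  rw [← pow_one (idealOfVars σ R), mem_pow_idealOfVars_iff']
  simp [Finsupp.degree_eq_zero_iff, constantCoeff]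

section CoeffMap

variable {R A B ι : Type*} [CommSemiring R] [CommSemiring A] [CommSemiring B] [Algebra R A]
  [Algebra R B]

def coeffMap (φ : A →ₐ[R] B) : (ι →₀ A) →ₗ[R] (ι →₀ B) :=
  Finsupp.mapRange.linearMap φ.toLinearMap

variable (φ : A →ₐ[R] B)

@[simp]
theorem coeffMap_apply (z : ι →₀ A) (x : ι) : coeffMap φ z x = φ (z x) := rfl

@[simp]
theorem coeffMap_single (x : ι) (a : A) :
    coeffMap φ (Finsupp.single x a) = Finsupp.single x (φ a) := by
  simp [coeffMap]

@[simp]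
theorem coeffMap_smul (a : A) (z : ι →₀ A) : coeffMap φ (a • z) = φ a • coeffMap φ z := by
  ext x
  simp

theorem coeffMap_mem_supported {S : Type*} [Semiring S] [Module S A] [Module S B] {s : Set ι}
    {z : ι →₀ A} (hz : z ∈ Finsupp.supported A S s) : coeffMap φ z ∈ Finsupp.supported B S s :=
  (Finsupp.mem_supported _ _).2 <|
    (Finset.coe_subset.2 <| Finsupp.support_mapRange (hf := map_zero φ.toLinearMap)).trans
      ((Finsupp.mem_supported _ _).1 hz)

theorem coeffMap_lsum {κ : Type*} (f : ι → κ →₀ A) (z : ι →₀ A) :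
    coeffMap φ (Finsupp.lsum A (fun x => LinearMap.toSpanSingleton A _ (f x)) z) =
      Finsupp.lsum B (fun x => LinearMap.toSpanSingleton B _ (coeffMap φ (f x)))
        (coeffMap φ z) := by
  induction z using Finsupp.induction_linear with
  | zero => simp
  | add z w hz hw => simp only [map_add, hz, hw]
  | single x a => simp

end CoeffMap

section FockOperators

variable (A : Type*) [CommRing A]

def fockAlpha (k : ℕ) : (FockIdx →₀ A) →ₗ[A] (FockIdx →₀ A) :=
  Finsupp.lsum A fun x => LinearMap.toSpanSingleton A _
    (if k ∈ x.2 then 0 else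
      (((-1 : A) ^ x.1.card) * ((-1 : A) ^ (x.2.filter (· < k)).card)) •
        Finsupp.single (x.1, insert k x.2) 1)

def fockBeta (k : ℕ) : (FockIdx →₀ A) →ₗ[A] (FockIdx →₀ A) :=
  Finsupp.lsum A fun x => LinearMap.toSpanSingleton A _
    (if k ∈ x.1 then
      ((-1 : A) ^ (x.1.filter (· < k)).card) • Finsupp.single (x.1.erase k, x.2) 1
     else 0)

def fockOmega : (FockIdx →₀ A) →ₗ[A] (FockIdx →₀ A) :=
  Finsupp.lsum A fun x => LinearMap.toSpanSingleton A _
    (∑ k ∈ x.1, fockAlpha A k (fockBeta A k (Finsupp.single x 1)))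

theorem omega_eq_fockOmega : omega = fockOmega ℂ := rfl

theorem dOmega_eq_fockOmega : dOmega = fockOmega Dring := rfl

variable {A} {R B : Type*} [CommSemiring R] [CommRing B] [Algebra R A] [Algebra R B]
  (φ : A →ₐ[R] B)

theorem coeffMap_fockAlpha (k : ℕ) (z : FockIdx →₀ A) :
    coeffMap φ (fockAlpha A k z) = fockAlpha B k (coeffMap φ z) := by
  simp only [fockAlpha, coeffMap_lsum]
  congr! 3 with x
  split_ifs
  · rw [map_zero]
  · simp only [coeffMap_smul, coeffMap_single, map_mul, map_pow, map_neg, map_one]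

theorem coeffMap_fockBeta (k : ℕ) (z : FockIdx →₀ A) :
    coeffMap φ (fockBeta A k z) = fockBeta B k (coeffMap φ z) := by
  simp only [fockBeta, coeffMap_lsum]
  congr! 3 with x
  split_ifs
  · simp only [coeffMap_smul, coeffMap_single, map_pow, map_neg, map_one]
  · rw [map_zero]

theorem coeffMap_fockOmega (z : FockIdx →₀ A) :
    coeffMap φ (fockOmega A z) = fockOmega B (coeffMap φ z) := by
  simp only [fockOmega, coeffMap_lsum, map_sum, coeffMap_fockAlpha, coeffMap_fockBeta,
    coeffMap_single, map_one]

end FockOperators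

def evalZero : DFock →ₗ[ℂ] Fock := coeffMap (MvPolynomial.aeval 0)

def includeConst : Fock →ₗ[ℂ] DFock := coeffMap (Algebra.ofId ℂ Dring)

theorem evalZero_includeConst (w : Fock) : evalZero (includeConst w) = w := by
  ext x
  simp [evalZero, includeConst]

theorem evalZero_dOmega (z : DFock) : evalZero (dOmega z) = omega (evalZero z) := by
  rw [dOmega_eq_fockOmega, omega_eq_fockOmega]
  exact coeffMap_fockOmega _ z

theorem includeConst_omega (w : Fock) : includeConst (omega w) = dOmega (includeConst w) := by
  rw [dOmega_eq_fockOmega, omega_eq_fockOmega]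
  exact coeffMap_fockOmega _ w

theorem map_constantCoeff_genX : PowerSeries.map MvPolynomial.constantCoeff genX = 0 := by
  ext n
  simp only [genX, PowerSeries.coeff_map, PowerSeries.coeff_mk]
  split_ifs <;> simp

theorem constantCoeff_T {n : ℕ} (hn : n ≠ 0) : MvPolynomial.constantCoeff (T n) = 0 := by
  refine (map_sum _ _ _).trans (Finset.sum_eq_zero fun j _ => ?_)
  rw [MvPolynomial.constantCoeff_smul, ← PowerSeries.coeff_map, map_pow, map_constantCoeff_genX]
  rcases j with _ | j
  · simp [PowerSeries.coeff_one, hn]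
  · simp

theorem evalZero_dOp (z : DFock) : evalZero (dOp z) = 0 := by
  rw [dOp, evalZero, coeffMap_lsum]
  simp [constantCoeff_T, Finsupp.sum]

theorem evalZero_mem_FockC {n : ℤ} {z : DFock} (hz : z ∈ DFockCc n) : evalZero z ∈ FockC n :=
  coeffMap_mem_supported _ hz

theorem includeConst_mem_DFockCc {n : ℤ} {w : Fock} (hw : w ∈ FockC n) :
    includeConst w ∈ DFockCc n :=
  coeffMap_mem_supported _ hw

theorem map_evalZero_DFockCc (n : ℤ) : Submodule.map evalZero (DFockCc n) = FockC n :=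
  le_antisymm (Submodule.map_le_iff_le_comap.2 fun _ => evalZero_mem_FockC)
    fun w hw => ⟨includeConst w, includeConst_mem_DFockCc hw, evalZero_includeConst w⟩

theorem mem_mIdeal_iff {c : Dring} : c ∈ mIdeal ↔ MvPolynomial.constantCoeff c = 0 :=
  MvPolynomial.mem_idealOfVars_iff

theorem mPart_le_ker_evalZero (n : ℤ) : mPart n ≤ LinearMap.ker evalZero := by
  rw [mPart, Submodule.span_le]
  rintro _ ⟨c, hc, v, -, rfl⟩
  simp [evalZero, mem_mIdeal_iff.1 hc]

theorem mem_mPart_of_forall_mem_mIdeal {n : ℤ} {z : DFock} (hz : z ∈ DFockCc n)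
    (hcoeff : ∀ x, z x ∈ mIdeal) : z ∈ mPart n := by
  rw [DFockCc, Finsupp.mem_supported] at hz
  rw [← Finsupp.sum_single z]
  refine Submodule.sum_mem _ fun x hx => Submodule.subset_span ⟨z x, hcoeff x, dsingle x,
    Finsupp.single_mem_supported _ _ (hz hx), by simp [dsingle]⟩

theorem sub_includeConst_evalZero_mem_mPart {n : ℤ} {v : DFock} (hv : v ∈ DFockCc n) :
    v - includeConst (evalZero v) ∈ mPart n := by
  refine mem_mPart_of_forall_mem_mIdeal
    (sub_mem hv (includeConst_mem_DFockCc (evalZero_mem_FockC hv))) fun x => ?_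
  simp [mem_mIdeal_iff, evalZero, includeConst]

theorem NA_sup_mPart_le_comap_evalZero (n : ℤ) :
    NA n ⊔ mPart n ≤ (Submodule.map omega (FockC (n + 2))).comap evalZero := by
  refine sup_le (sup_le ?_ ?_) ((mPart_le_ker_evalZero n).trans ?_)
  · rintro _ ⟨w, -, rfl⟩
    simp [evalZero_dOp]
  · rintro _ ⟨w, hw, rfl⟩
    exact ⟨evalZero w, evalZero_mem_FockC hw, (evalZero_dOmega w).symm⟩
  · exact fun w hw => by simp [LinearMap.mem_ker.1 hw]

theorem mem_NA_sup_mPart_iff {n : ℤ} {v : DFock} (hv : v ∈ DFockCc n) :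
    v ∈ NA n ⊔ mPart n ↔ evalZero v ∈ Submodule.map omega (FockC (n + 2)) := by
  refine ⟨fun h => NA_sup_mPart_le_comap_evalZero n h, ?_⟩
  rintro ⟨u, hu, hvu⟩
  have hconst : includeConst (evalZero v) ∈ NA n := by
    rw [← hvu, includeConst_omega]
    exact Submodule.mem_sup_right ⟨includeConst u, includeConst_mem_DFockCc hu, rfl⟩
  rw [← add_sub_cancel (includeConst (evalZero v)) v]
  exact add_mem (Submodule.mem_sup_left hconst)
    (Submodule.mem_sup_right (sub_includeConst_evalZero_mem_mPart hv))

/-- For every integer `m ≥ 0`, `A_m/𝔪A_m ≅ W_m` as `ℂ`-vector spaces,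
where `𝔪 = (t₁,t₃,…) ⊆ 𝒟`. -/
theorem minimal_generators_even (m : ℕ) :
    Nonempty (↥(AmodM m) ≃ₗ[ℂ] ↥(Wsub m)) := by
  have h := Submodule.nonempty_map_mkQ_equiv_of_iff evalZero fun v hv =>
    mem_NA_sup_mPart_iff (n := m) hv
  rwa [map_evalZero_DFockCc] at h
end
end

section
/- Injectivity of the divided-power operator in the odd sector: for every integer m ≥ 1, the restriction ω′ : F′_{m,0} → F′_{m−2,0} is injective. -/
open scoped BigOperators

noncomputable section

/-! ### Odd sector
In the odd sector the `a`-modes are indexed by `n ≥ 0`: an element `k` of the second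
component of a Fock index stands for `a′_k`, while an element `k` of the first component
stands for `b′_{k+1}`.  The space `F′_m` and the operators `α′ₙ` (`n ≥ 0`), `β′ₙ` (`n ≥ 1`)
are realized by the same `Fock`, `alpha`, `beta` as above under this reading. -/

/-- `ω′ = ∑_{n≥1} α′ₙ β′ₙ : F′_m → F′_{m−2}`. -/
def omegaO : Fock →ₗ[ℂ] Fock :=
  Finsupp.lsum ℂ fun x => LinearMap.toSpanSingleton ℂ Fock
    (∑ k ∈ x.1, alpha (k + 1) (beta k (fsingle x)))

/-- `F′_{m,0} ⊆ F′_m`: the part not involving the mode `a′₀`. -/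
def FockC0 (m : ℤ) : Submodule ℂ Fock :=
  Finsupp.supported ℂ ℂ {x | charge x = m ∧ 0 ∉ x.2}

/-!
Let `F` be the transpose of `ω′` in the basis `fsingle` and `H` the diagonal operator with
eigenvalue `#(S ∖ {0}) - #R` on `fsingle (R, S)`. Moving one mode at a time, `ω′F - Fω′ = H`,
`Hω′ - ω′H = 2ω′` and `HF - FH = -2F`, so `(H, ω′, F)` is an `sl₂`-triple, and a nonzero
`v ∈ F′_{m,0}` with `ω′ v = 0` is a primitive vector of weight `-m`. Since `F` lowers the number
of `a′`-modes, `Fᴺ v = 0` for large `N`, and the identity `ω′ Fⁿ⁺¹ v = (n + 1)(-m - n) Fⁿ v`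
then forces `-m` to be a natural number, which fails for `m ≥ 1`.
-/

open Finset

namespace Finset

variable {α : Type*} [DecidableEq α] {s : Finset α} {a : α} (p : α → Prop) [DecidablePred p]

lemma card_filter_insert_of_notMem (ha : a ∉ s) :
    #((insert a s).filter p) = #(s.filter p) + if p a then 1 else 0 := by
  rw [filter_insert]
  split_ifs with h
  · exact card_insert_of_notMem fun h' => ha (mem_filter.1 h').1
  · rfl

lemma card_filter_erase_add_of_mem (ha : a ∈ s) :
    #((s.erase a).filter p) + (if p a then 1 else 0) = #(s.filter p) := by
  rw [filter_erase]
  split_ifs with h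
  · exact card_erase_add_one (mem_filter.2 ⟨ha, h⟩)
  · rw [erase_eq_of_notMem fun h' => h (mem_filter.1 h').2, add_zero]

end Finset

lemma card_filter_add_one_mem (R S : Finset ℕ) :
    #(R.filter (· + 1 ∈ S)) = #((S.erase 0).filter (· - 1 ∈ R)) := by
  refine card_nbij' (· + 1) (· - 1) ?_ ?_ ?_ ?_ <;> intro a ha <;> simp at ha ⊢
  · exact ha.symm
  · rw [Nat.sub_add_cancel (Nat.one_le_iff_ne_zero.2 ha.1.1)]
    exact ⟨ha.2, ha.1.2⟩
  · omega

lemma sum_ite_sub_sum_ite (R S : Finset ℕ) :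
    (∑ j ∈ S, if j = 0 ∨ j - 1 ∈ R then 0 else 1 : ℂ) -
        ∑ k ∈ R, (if k + 1 ∈ S then 0 else 1 : ℂ) = #(S.erase 0) - #R := by
  have hS : (∑ j ∈ S, if j = 0 ∨ j - 1 ∈ R then 0 else 1 : ℂ) =
      #((S.erase 0).filter (· - 1 ∉ R)) := by
    rw [sum_ite, sum_const_zero, zero_add, sum_const, nsmul_one]
    congr 2
    ext j
    simp only [mem_filter, mem_erase]
    tauto
  have hR : (∑ k ∈ R, if k + 1 ∈ S then 0 else 1 : ℂ) = #(R.filter (· + 1 ∉ S)) := by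
    rw [sum_ite, sum_const_zero, zero_add, sum_const, nsmul_one]
  have hS' := card_filter_add_card_filter_not (s := S.erase 0) (· - 1 ∈ R)
  have hR' := card_filter_add_card_filter_not (s := R) (· + 1 ∈ S)
  have := card_filter_add_one_mem R S
  rw [hS, hR, sub_eq_sub_iff_add_eq_add]
  exact_mod_cast (by omega :
    #((S.erase 0).filter (· - 1 ∉ R)) + #R = #(S.erase 0) + #(R.filter (· + 1 ∉ S)))

lemma IsSl2Triple.HasPrimitiveVectorWith.exists_nat_of_pow_toEnd_f_apply_eq_zero
    {R L M : Type*} [CommRing R] [IsDomain R] [CharZero R] [LieRing L] [LieAlgebra R L]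
    [AddCommGroup M] [Module R M] [LieRingModule L M] [LieModule R L M] [Module.IsTorsionFree R M]
    {h e f : L} {t : IsSl2Triple h e f} {m : M} {μ : R} (P : t.HasPrimitiveVectorWith m μ)
    {N : ℕ} (hN : (LieModule.toEnd R L M f ^ N) m = 0) : ∃ n : ℕ, μ = n := by
  obtain ⟨n, hn, hn'⟩ := Nat.exists_not_and_succ_of_not_zero_of_exists
    (p := fun n => (LieModule.toEnd R L M f ^ n) m = 0) (by simpa using P.ne_zero) ⟨N, hN⟩
  refine ⟨n, ?_⟩
  have := P.lie_e_pow_succ_toEnd_f n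
  rw [hn', lie_zero, eq_comm, smul_eq_zero_iff_left hn, mul_eq_zero, sub_eq_zero] at this
  exact this.resolve_left (Nat.cast_add_one_ne_zero n)

lemma lsum_toSpanSingleton_fsingle (g : FockIdx → Fock) (x : FockIdx) :
    Finsupp.lsum ℂ (fun y => LinearMap.toSpanSingleton ℂ Fock (g y)) (fsingle x) = g x := by
  rw [fsingle, Finsupp.lsum_single, LinearMap.toSpanSingleton_apply, one_smul]

lemma Fock.ext_fsingle {φ ψ : Fock →ₗ[ℂ] Fock} (h : ∀ x, φ (fsingle x) = ψ (fsingle x)) :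
    φ = ψ :=
  Finsupp.lhom_ext' fun x => LinearMap.ext_ring (h x)

lemma map_supported_le {s t : Set FockIdx} (φ : Fock →ₗ[ℂ] Fock)
    (h : ∀ x ∈ s, φ (fsingle x) ∈ Finsupp.supported ℂ ℂ t) :
    (Finsupp.supported ℂ ℂ s).map φ ≤ Finsupp.supported ℂ ℂ t := by
  rw [Finsupp.supported_eq_span_single, Submodule.map_span_le]
  rintro _ ⟨x, hx, rfl⟩
  exact h x hx

def omegaOTarget (x : FockIdx) (k : ℕ) : FockIdx := (x.1.erase k, insert (k + 1) x.2)

def omegaOCoeff (x : FockIdx) (k : ℕ) : ℂ :=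
  if k + 1 ∈ x.2 then 0 else
    (-1) ^ (#(x.1.filter (· < k)) + #(x.1.erase k) + #(x.2.filter (· < k + 1)))

lemma omegaOCoeff_of_notMem {x : FockIdx} {k : ℕ} (hk : k + 1 ∉ x.2) :
    omegaOCoeff x k =
      (-1) ^ (#(x.1.filter (· < k)) + #(x.1.erase k) + #(x.2.filter (· < k + 1))) :=
  if_neg hk

lemma omegaOCoeff_mul_self {x : FockIdx} {k : ℕ} (hk : k + 1 ∉ x.2) :
    omegaOCoeff x k * omegaOCoeff x k = 1 := by
  rw [omegaOCoeff_of_notMem hk, ← pow_add, ← two_mul, pow_mul, neg_one_sq, one_pow]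

lemma omegaO_fsingle (x : FockIdx) :
    omegaO (fsingle x) = ∑ k ∈ x.1, omegaOCoeff x k • fsingle (omegaOTarget x k) := by
  rw [omegaO, lsum_toSpanSingleton_fsingle]
  refine sum_congr rfl fun k hk => ?_
  rw [beta, lsum_toSpanSingleton_fsingle, if_pos hk, map_smul, alpha,
    lsum_toSpanSingleton_fsingle, omegaOCoeff, omegaOTarget]
  split_ifs <;> simp [smul_smul, pow_add, mul_assoc]

def omegaODualTarget (x : FockIdx) (j : ℕ) : FockIdx := (insert (j - 1) x.1, x.2.erase j)

-- The transpose of `omegaO` in the basis `fsingle`.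
def omegaODualCoeff (x : FockIdx) (j : ℕ) : ℂ :=
  if j = 0 ∨ j - 1 ∈ x.1 then 0 else omegaOCoeff (omegaODualTarget x j) (j - 1)

def omegaODual : Fock →ₗ[ℂ] Fock :=
  Finsupp.lsum ℂ fun x => LinearMap.toSpanSingleton ℂ Fock
    (∑ j ∈ x.2, omegaODualCoeff x j • fsingle (omegaODualTarget x j))

lemma omegaODual_fsingle (x : FockIdx) :
    omegaODual (fsingle x) = ∑ j ∈ x.2, omegaODualCoeff x j • fsingle (omegaODualTarget x j) :=
  lsum_toSpanSingleton_fsingle _ x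

lemma omegaOTarget_omegaODualTarget {x : FockIdx} {j : ℕ} (hj : j ∈ x.2) (hj0 : j ≠ 0)
    (hjR : j - 1 ∉ x.1) : omegaOTarget (omegaODualTarget x j) (j - 1) = x := by
  rw [omegaODualTarget, omegaOTarget, Nat.sub_add_cancel (Nat.one_le_iff_ne_zero.2 hj0),
    erase_insert hjR, insert_erase hj]

lemma omegaODualTarget_omegaOTarget {x : FockIdx} {k : ℕ} (hk : k ∈ x.1) (hkS : k + 1 ∉ x.2) :
    omegaODualTarget (omegaOTarget x k) (k + 1) = x := by
  rw [omegaOTarget, omegaODualTarget, Nat.add_sub_cancel, insert_erase hk, erase_insert hkS]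

lemma omegaODualCoeff_omegaOTarget {x : FockIdx} {k : ℕ} (hk : k ∈ x.1) (hkS : k + 1 ∉ x.2) :
    omegaODualCoeff (omegaOTarget x k) (k + 1) = omegaOCoeff x k := by
  rw [omegaODualCoeff, if_neg, omegaODualTarget_omegaOTarget hk hkS, Nat.add_sub_cancel]
  simp [omegaOTarget]

lemma omegaOTarget_omegaODualTarget_comm {x : FockIdx} {j k : ℕ} (hkj : k + 1 ≠ j)
    (hjk : j - 1 ≠ k) :
    omegaOTarget (omegaODualTarget x j) k = omegaODualTarget (omegaOTarget x k) j := by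
  simp only [omegaOTarget, omegaODualTarget, erase_insert_of_ne hjk, erase_insert_of_ne hkj]

lemma omegaOCoeff_omegaODualTarget_mul_comm {x : FockIdx} {i k : ℕ} (hi : i + 1 ∈ x.2)
    (hk : k ∈ x.1) (hiR : i ∉ x.1) (hkS : k + 1 ∉ x.2) (hik : i ≠ k) :
    omegaOCoeff (omegaODualTarget x (i + 1)) i * omegaOCoeff (omegaODualTarget x (i + 1)) k =
      omegaOCoeff x k * omegaOCoeff (omegaODualTarget (omegaOTarget x k) (i + 1)) i := by
  have hki : k + 1 ≠ i + 1 := by omega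
  have hiRk : i ∉ x.1.erase k := fun h => hiR (mem_of_mem_erase h)
  have hkSi : k + 1 ∉ x.2.erase (i + 1) := fun h => hkS (mem_of_mem_erase h)
  simp only [omegaODualTarget, omegaOTarget, Nat.add_sub_cancel]
  rw [omegaOCoeff_of_notMem (notMem_erase _ _), omegaOCoeff_of_notMem hkSi,
    omegaOCoeff_of_notMem hkS, omegaOCoeff_of_notMem (by simp),
    erase_insert hiR, erase_insert hiRk, erase_insert_of_ne hik, erase_insert_of_ne hki]
  rw [← pow_add, ← pow_add]
  refine neg_one_pow_congr ?_
  have h1 := card_filter_insert_of_notMem (· < i) hiR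
  have h2 := card_filter_insert_of_notMem (· < k) hiR
  have h3 := card_filter_erase_add_of_mem (· < i + 1) hi
  have h4 := card_filter_erase_add_of_mem (· < k + 1) hi
  have h5 := card_filter_erase_add_of_mem (· < i) hk
  have h6 := card_filter_insert_of_notMem (· < i + 1) hkSi
  have h7 := card_erase_add_one hk
  have h8 := card_insert_of_notMem hiRk
  have h9 := card_filter_insert_of_notMem (· < i) hiRk
  simp only [Nat.even_iff]
  split_ifs at h1 h2 h3 h4 h5 h6 h9 <;> omega

lemma omegaODualCoeff_smul_omegaO_fsingle {x : FockIdx} {j : ℕ} (hj : j ∈ x.2) :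
    omegaODualCoeff x j • omegaO (fsingle (omegaODualTarget x j)) =
      (if j = 0 ∨ j - 1 ∈ x.1 then 0 else 1 : ℂ) • fsingle x +
        ∑ k ∈ x.1, (omegaODualCoeff x j * omegaOCoeff (omegaODualTarget x j) k) •
          fsingle (omegaOTarget (omegaODualTarget x j) k) := by
  by_cases hj' : j = 0 ∨ j - 1 ∈ x.1
  · simp [omegaODualCoeff, hj']
  obtain ⟨hj0, hjR⟩ := not_or.1 hj'
  have hjS : j - 1 + 1 ∉ (omegaODualTarget x j).2 := by
    rw [Nat.sub_add_cancel (Nat.one_le_iff_ne_zero.2 hj0)]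
    exact notMem_erase _ _
  rw [omegaO_fsingle, show (omegaODualTarget x j).1 = insert (j - 1) x.1 from rfl,
    sum_insert hjR, smul_add, smul_sum, smul_smul, if_neg hj', omegaODualCoeff, if_neg hj',
    omegaOCoeff_mul_self hjS, omegaOTarget_omegaODualTarget hj hj0 hjR]
  simp only [smul_smul]

lemma omegaOCoeff_smul_omegaODual_fsingle {x : FockIdx} {k : ℕ} (hk : k ∈ x.1) :
    omegaOCoeff x k • omegaODual (fsingle (omegaOTarget x k)) =
      (if k + 1 ∈ x.2 then 0 else 1 : ℂ) • fsingle x +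
        ∑ j ∈ x.2, (omegaOCoeff x k * omegaODualCoeff (omegaOTarget x k) j) •
          fsingle (omegaODualTarget (omegaOTarget x k) j) := by
  by_cases hkS : k + 1 ∈ x.2
  · simp [omegaOCoeff, hkS]
  rw [omegaODual_fsingle, show (omegaOTarget x k).2 = insert (k + 1) x.2 from rfl,
    sum_insert hkS, smul_add, smul_sum, smul_smul, if_neg hkS,
    omegaODualCoeff_omegaOTarget hk hkS, omegaOCoeff_mul_self hkS,
    omegaODualTarget_omegaOTarget hk hkS]
  simp only [smul_smul]

lemma omegaODual_omegaO_term_comm {x : FockIdx} {j k : ℕ} (hj : j ∈ x.2) (hk : k ∈ x.1) :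
    (omegaODualCoeff x j * omegaOCoeff (omegaODualTarget x j) k) •
        fsingle (omegaOTarget (omegaODualTarget x j) k) =
      (omegaOCoeff x k * omegaODualCoeff (omegaOTarget x k) j) •
        fsingle (omegaODualTarget (omegaOTarget x k) j) := by
  rcases j with _ | i
  · simp [omegaODualCoeff]
  obtain rfl | hik := eq_or_ne i k
  · simp [omegaODualCoeff, omegaOCoeff, hk, hj]
  by_cases hiR : i ∈ x.1
  · have : i ∈ (omegaOTarget x k).1 := mem_erase.2 ⟨hik, hiR⟩
    simp [omegaODualCoeff, hiR, this]
  by_cases hkS : k + 1 ∈ x.2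
  · have : k + 1 ∈ (omegaODualTarget x (i + 1)).2 := mem_erase.2 ⟨by omega, hkS⟩
    simp [omegaOCoeff, hkS, this]
  have hiR' : i ∉ (omegaOTarget x k).1 := fun h => hiR (mem_of_mem_erase h)
  simp only [omegaODualCoeff, add_eq_zero, one_ne_zero, and_false, Nat.add_sub_cancel,
    false_or, hiR, hiR', if_false,
    omegaOCoeff_omegaODualTarget_mul_comm hj hk hiR hkS hik,
    omegaOTarget_omegaODualTarget_comm (x := x) (j := i + 1) (k := k) (by omega) (by omega)]

-- Neither `omegaO` nor `omegaODual` touches the mode `a′₀`, so counting it would break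
-- `⁅omegaO, omegaODual⁆ = weightOEnd`.
def weightO (x : FockIdx) : ℂ := #(x.2.erase 0) - #x.1

def weightOEnd : Module.End ℂ Fock :=
  Finsupp.lsum ℂ fun x => LinearMap.toSpanSingleton ℂ Fock (weightO x • fsingle x)

lemma weightOEnd_fsingle (x : FockIdx) : weightOEnd (fsingle x) = weightO x • fsingle x :=
  lsum_toSpanSingleton_fsingle _ x

lemma weightO_omegaOTarget {x : FockIdx} {k : ℕ} (hk : k ∈ x.1) (hkS : k + 1 ∉ x.2) :
    weightO (omegaOTarget x k) = weightO x + 2 := by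
  have hR := card_erase_add_one hk
  have hS := card_insert_of_notMem (s := x.2.erase 0) fun h => hkS (mem_of_mem_erase h)
  rw [weightO, weightO, omegaOTarget, erase_insert_of_ne k.succ_ne_zero, hS, ← hR]
  push_cast
  ring

lemma weightO_omegaODualTarget {x : FockIdx} {j : ℕ} (hj : j ∈ x.2) (hj0 : j ≠ 0)
    (hjR : j - 1 ∉ x.1) : weightO (omegaODualTarget x j) = weightO x - 2 := by
  have hS := card_erase_add_one (mem_erase.2 ⟨hj0, hj⟩)
  rw [weightO, weightO, omegaODualTarget, erase_right_comm, card_insert_of_notMem hjR, ← hS]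
  push_cast
  ring

lemma omegaO_omegaODual_sub_fsingle (x : FockIdx) :
    omegaO (omegaODual (fsingle x)) - omegaODual (omegaO (fsingle x)) = weightO x • fsingle x := by
  rw [omegaODual_fsingle, omegaO_fsingle, map_sum, map_sum]
  simp only [map_smul]
  rw [sum_congr rfl fun j hj => omegaODualCoeff_smul_omegaO_fsingle hj,
    sum_congr rfl fun k hk => omegaOCoeff_smul_omegaODual_fsingle hk,
    sum_add_distrib, sum_add_distrib, sum_comm (s := x.2),
    sum_congr rfl fun k hk => sum_congr rfl fun j hj => omegaODual_omegaO_term_comm hj hk,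
    add_sub_add_right_eq_sub, ← sum_smul, ← sum_smul, ← sub_smul, sum_ite_sub_sum_ite, weightO]

lemma lie_omegaO_omegaODual : ⁅omegaO, omegaODual⁆ = weightOEnd :=
  Fock.ext_fsingle fun x => by
    rw [Ring.lie_def, LinearMap.sub_apply, Module.End.mul_apply, Module.End.mul_apply,
      omegaO_omegaODual_sub_fsingle, weightOEnd_fsingle]

lemma lie_weightOEnd_omegaO : ⁅weightOEnd, omegaO⁆ = 2 • omegaO :=
  Fock.ext_fsingle fun x => by
    rw [Ring.lie_def, LinearMap.sub_apply, Module.End.mul_apply, Module.End.mul_apply,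
      LinearMap.smul_apply, weightOEnd_fsingle, map_smul, omegaO_fsingle, map_sum, smul_sum,
      smul_sum, ← sum_sub_distrib]
    refine sum_congr rfl fun k hk => ?_
    by_cases hkS : k + 1 ∈ x.2
    · simp [omegaOCoeff, hkS]
    rw [map_smul, weightOEnd_fsingle, weightO_omegaOTarget hk hkS]
    module

lemma lie_weightOEnd_omegaODual : ⁅weightOEnd, omegaODual⁆ = -(2 • omegaODual) :=
  Fock.ext_fsingle fun x => by
    rw [Ring.lie_def, LinearMap.sub_apply, Module.End.mul_apply, Module.End.mul_apply,
      LinearMap.neg_apply, LinearMap.smul_apply, weightOEnd_fsingle, map_smul,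
      omegaODual_fsingle, map_sum, smul_sum, smul_sum, ← sum_sub_distrib, ← sum_neg_distrib]
    refine sum_congr rfl fun j hj => ?_
    by_cases hj' : j = 0 ∨ j - 1 ∈ x.1
    · simp [omegaODualCoeff, hj']
    obtain ⟨hj0, hjR⟩ := not_or.1 hj'
    rw [map_smul, weightOEnd_fsingle, weightO_omegaODualTarget hj hj0 hjR]
    module

lemma weightOEnd_ne_zero : weightOEnd ≠ 0 := by
  intro h
  have := LinearMap.congr_fun h (fsingle (∅, {1}))
  rw [weightOEnd_fsingle, LinearMap.zero_apply] at this
  simp [weightO, fsingle] at this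

attribute [local instance] LieRing.ofAssociativeRing

lemma isSl2Triple_omegaO : IsSl2Triple weightOEnd omegaO omegaODual where
  h_ne_zero := weightOEnd_ne_zero
  lie_e_f := lie_omegaO_omegaODual
  lie_h_e_nsmul := lie_weightOEnd_omegaO
  lie_h_f_nsmul := lie_weightOEnd_omegaODual

lemma weightOEnd_apply_of_mem {m : ℤ} {v : Fock} (hv : v ∈ FockC0 m) :
    weightOEnd v = (-m : ℂ) • v := by
  rw [FockC0, Finsupp.supported_eq_span_single] at hv
  refine LinearMap.eqOn_span' (g := (-m : ℂ) • LinearMap.id) ?_ hv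
  rintro _ ⟨x, ⟨hx, hx0⟩, rfl⟩
  change weightOEnd (fsingle x) = (-m : ℂ) • fsingle x
  rw [weightOEnd_fsingle, weightO, erase_eq_of_notMem hx0, ← hx, charge]
  push_cast
  rw [neg_sub]

lemma omegaODual_apply_mem_supported {n : ℕ} {v : Fock}
    (hv : v ∈ Finsupp.supported ℂ ℂ {x : FockIdx | #x.2 < n + 1}) :
    omegaODual v ∈ Finsupp.supported ℂ ℂ {x : FockIdx | #x.2 < n} := by
  refine map_supported_le omegaODual (fun x hx => ?_) ⟨v, hv, rfl⟩
  rw [omegaODual_fsingle]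
  refine Submodule.sum_mem _ fun j hj => Submodule.smul_mem _ _ ?_
  refine Finsupp.single_mem_supported ℂ _ ?_
  have := card_erase_add_one hj
  simp only [Set.mem_ofPred_eq, omegaODualTarget] at hx ⊢
  omega

lemma exists_pow_omegaODual_apply_eq_zero (v : Fock) : ∃ N : ℕ, (omegaODual ^ N) v = 0 := by
  obtain ⟨N, hN⟩ : ∃ N : ℕ, v ∈ Finsupp.supported ℂ ℂ {x : FockIdx | #x.2 < N} :=
    ⟨v.support.sup (#·.2) + 1, fun x hx => Nat.lt_succ_of_le (le_sup (f := (#·.2)) hx)⟩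
  refine ⟨N, ?_⟩
  suffices ∀ n k, v ∈ Finsupp.supported ℂ ℂ {x : FockIdx | #x.2 < n + k} →
      (omegaODual ^ k) v ∈ Finsupp.supported ℂ ℂ {x : FockIdx | #x.2 < n} by
    simpa using this 0 N (by simpa using hN)
  intro n k
  induction k generalizing n with
  | zero => simp
  | succ k ih =>
    intro hv
    rw [pow_succ', Module.End.mul_apply]
    exact omegaODual_apply_mem_supported (ih (n + 1) (by rwa [add_right_comm, add_assoc]))

/-- For every integer `m ≥ 1`, the restriction
`ω′ : F′_{m,0} → F′_{m−2,0}` is injective. -/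
theorem omegaO_injective (m : ℤ) (hm : 1 ≤ m) :
    ∀ v ∈ FockC0 m, omegaO v = 0 → v = 0 := by
  intro v hv hωv
  by_contra hv0
  have P : isSl2Triple_omegaO.HasPrimitiveVectorWith v (-m : ℂ) :=
    ⟨hv0, weightOEnd_apply_of_mem hv, hωv⟩
  obtain ⟨N, hN⟩ := exists_pow_omegaODual_apply_eq_zero v
  obtain ⟨n, hn⟩ := P.exists_nat_of_pow_toEnd_f_apply_eq_zero (N := N) (by simpa using hN)
  have : -m = n := by exact_mod_cast hn
  omega
end
end

section
/- Symplectic Lefschetz injectivity on exterior powers: for every N ≥ 1 and every k with 0 ≤ k ≤ N−1, the linear map ΛᵏV_N → Λ^{k+2}V_N, v ↦ η_N ∧ v, is injective. -/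
open scoped BigOperators

noncomputable section

/-- The `2N`-dimensional complex vector space `V_N` with basis
`α₁,…,α_N` (the `Sum.inl` coordinates) and `β₁,…,β_N` (the `Sum.inr` coordinates). -/
abbrev VS (N : ℕ) : Type := (Fin N ⊕ Fin N) → ℂ

/-- The basis vector `α_{i+1}` of `V_N`. -/
def av (N : ℕ) (i : Fin N) : VS N := Pi.single (Sum.inl i) 1

/-- The basis vector `β_{i+1}` of `V_N`. -/
def bv (N : ℕ) (i : Fin N) : VS N := Pi.single (Sum.inr i) 1

/-- `η_N = ∑_{i=1}^N αᵢ ∧ βᵢ ∈ Λ²V_N`, inside the exterior algebra of `V_N`. -/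
def eta (N : ℕ) : ExteriorAlgebra ℂ (VS N) :=
  ∑ i : Fin N, ExteriorAlgebra.ι ℂ (av N i) * ExteriorAlgebra.ι ℂ (bv N i)

/-- The `k`-th exterior power `ΛᵏV_N`, as a subspace of the exterior algebra of `V_N`. -/
def EPfin (N k : ℕ) : Submodule ℂ (ExteriorAlgebra ℂ (VS N)) :=
  Submodule.span ℂ (Set.range (ExteriorAlgebra.ιMulti ℂ k))

/-!
Let `Λ = ∑ⱼ ι_{βⱼ} ι_{αⱼ}` be the contraction with the dual symplectic form. Together with
Euler's identity `∑ₜ eₜ ∧ (eₜ* ⌋ x) = k x` on `k`-forms, the Leibniz rule for contractions gives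
`Λ(η x) = η Λx + (N - k) x`, and hence
`Λ(η^{m+1} x) = η^{m+1} Λx + (m + 1)(N - k - m) η^m x`.
If `η^{m+1} x = 0` with `k + m < N`, multiplying this identity by `η` shows `η^{m+2} Λx = 0`,
so `Λx = 0` by induction on the degree (`Λx` has degree `k - 2`); the coefficient
`(m + 1)(N - k - m)` is then nonzero, so `η^m x = 0`, and descending in `m` gives `x = 0`.
-/

open CliffordAlgebra (contractLeft)

namespace ExteriorAlgebra

variable {R M : Type*} [CommRing R] [AddCommGroup M] [Module R M]

theorem contractLeft_ι_mul (d : Module.Dual R M) (a : M) (x : ExteriorAlgebra R M) :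
    contractLeft d (ι R a * x) = d a • x - ι R a * contractLeft d x :=
  CliffordAlgebra.contractLeft_ι_mul _ _ _

theorem ι_mem_exteriorPower_one (m : M) : ι R m ∈ ⋀[R]^1 M := by
  simp [exteriorPower]

theorem contractLeft_eq_zero_of_mem_exteriorPower_zero (d : Module.Dual R M)
    {x : ExteriorAlgebra R M} (hx : x ∈ ⋀[R]^0 M) : contractLeft d x = 0 := by
  rw [exteriorPower, pow_zero, Submodule.mem_one] at hx
  obtain ⟨r, rfl⟩ := hx
  exact CliffordAlgebra.contractLeft_algebraMap _ _ r

theorem contractLeft_mem_exteriorPower (d : Module.Dual R M) {k : ℕ}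
    {x : ExteriorAlgebra R M} (hx : x ∈ ⋀[R]^k M) : contractLeft d x ∈ ⋀[R]^(k - 1) M := by
  induction hx using Submodule.pow_induction_on_left' with
  | algebraMap r => simp [CliffordAlgebra.contractLeft_algebraMap]
  | add x y i _ _ hx hy => exact map_add (contractLeft d) x y ▸ add_mem hx hy
  | mem_mul m hm i y hy ih =>
    obtain ⟨a, rfl⟩ := hm
    rw [contractLeft_ι_mul]
    refine sub_mem (by simpa using Submodule.smul_mem _ (d a) hy) ?_
    rcases i with _ | i
    · simp [contractLeft_eq_zero_of_mem_exteriorPower_zero d hy]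
    · simpa [add_comm 1 i] using SetLike.mul_mem_graded (ι_mem_exteriorPower_one a) ih

theorem ι_mul_ι_mul_comm (a b : M) (x : ExteriorAlgebra R M) :
    ι R a * (ι R b * x) = -(ι R b * (ι R a * x)) := by
  rw [← mul_assoc, ← mul_assoc, eq_neg_of_add_eq_zero_left (ι_add_mul_swap a b), neg_mul]

theorem sum_ι_mul_contractLeft_coord {η : Type*} [Fintype η] (b : Module.Basis η R M) {k : ℕ}
    {x : ExteriorAlgebra R M} (hx : x ∈ ⋀[R]^k M) :
    ∑ i, ι R (b i) * contractLeft (b.coord i) x = k • x := by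
  induction hx using Submodule.pow_induction_on_left' with
  | algebraMap r => simp [CliffordAlgebra.contractLeft_algebraMap]
  | add x y i _ _ hx hy => simp only [map_add, mul_add, Finset.sum_add_distrib, hx, hy, smul_add]
  | mem_mul m hm i y hy ih =>
    obtain ⟨a, rfl⟩ := hm
    have hsum : ∑ j, b.coord j a • (ι R (b j) * y) = ι R a * y := by
      simp only [← smul_mul_assoc, ← Finset.sum_mul, Module.Basis.coord_apply, ← map_smul,
        ← map_sum, b.sum_repr]
    simp only [contractLeft_ι_mul, mul_sub, mul_smul_comm, ι_mul_ι_mul_comm _ a, sub_neg_eq_add,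
      Finset.sum_add_distrib, ← Finset.mul_sum, ih, hsum, succ_nsmul']

theorem sum_ι_single_mul_contractLeft_proj {η : Type*} [Fintype η] [DecidableEq η] {k : ℕ}
    {x : ExteriorAlgebra R (η → R)} (hx : x ∈ ⋀[R]^k (η → R)) :
    ∑ t, ι R (Pi.single t 1) * contractLeft (LinearMap.proj t) x = k • x := by
  have hcoord : ∀ t, (Pi.basisFun R η).coord t = LinearMap.proj t := fun t =>
    LinearMap.ext fun v => by simp
  simpa [hcoord] using sum_ι_mul_contractLeft_coord (Pi.basisFun R η) hx

theorem contractLeft_contractLeft_ι_mul_ι_mul (f g : Module.Dual R M) (a b : M)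
    (x : ExteriorAlgebra R M) :
    contractLeft g (contractLeft f (ι R a * (ι R b * x))) =
      (f a * g b - f b * g a) • x - f a • (ι R b * contractLeft g x)
        + f b • (ι R a * contractLeft g x) + g a • (ι R b * contractLeft f x)
        - g b • (ι R a * contractLeft f x)
        + ι R a * (ι R b * contractLeft g (contractLeft f x)) := by
  simp only [contractLeft_ι_mul, map_sub, map_smul, mul_sub, mul_smul_comm, smul_sub, smul_smul,
    sub_smul]
  abel

end ExteriorAlgebra

open ExteriorAlgebra

section

def dualLefschetz (N : ℕ) : ExteriorAlgebra ℂ (VS N) →ₗ[ℂ] ExteriorAlgebra ℂ (VS N) :=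
  ∑ j : Fin N,
    contractLeft (LinearMap.proj (Sum.inr j)) ∘ₗ contractLeft (LinearMap.proj (Sum.inl j))

variable {N : ℕ}

theorem dualLefschetz_apply (x : ExteriorAlgebra ℂ (VS N)) :
    dualLefschetz N x = ∑ j,
      contractLeft (LinearMap.proj (Sum.inr j)) (contractLeft (LinearMap.proj (Sum.inl j)) x) := by
  simp [dualLefschetz]

theorem dualLefschetz_mem_exteriorPower {k : ℕ} {x : ExteriorAlgebra ℂ (VS N)}
    (hx : x ∈ ⋀[ℂ]^k (VS N)) : dualLefschetz N x ∈ ⋀[ℂ]^(k - 2) (VS N) := by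
  rw [dualLefschetz_apply]
  exact Submodule.sum_mem _ fun j _ => Nat.sub_sub k 1 1 ▸
    contractLeft_mem_exteriorPower _ (contractLeft_mem_exteriorPower _ hx)

theorem dualLefschetz_eq_zero_of_le_one {k : ℕ} (hk : k ≤ 1) {x : ExteriorAlgebra ℂ (VS N)}
    (hx : x ∈ ⋀[ℂ]^k (VS N)) : dualLefschetz N x = 0 := by
  rw [dualLefschetz_apply]
  refine Finset.sum_eq_zero fun j _ => contractLeft_eq_zero_of_mem_exteriorPower_zero _ ?_
  simpa [Nat.sub_eq_zero_of_le hk] using contractLeft_mem_exteriorPower _ hx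

theorem eta_mem_exteriorPower_two : eta N ∈ ⋀[ℂ]^2 (VS N) :=
  Submodule.sum_mem _ fun _ _ =>
    SetLike.mul_mem_graded (ι_mem_exteriorPower_one _) (ι_mem_exteriorPower_one _)

theorem eta_pow_mul_mem_exteriorPower {k : ℕ} (m : ℕ) {x : ExteriorAlgebra ℂ (VS N)}
    (hx : x ∈ ⋀[ℂ]^k (VS N)) : eta N ^ m * x ∈ ⋀[ℂ]^(2 * m + k) (VS N) :=
  SetLike.mul_mem_graded (mul_comm 2 m ▸ SetLike.pow_mem_graded m eta_mem_exteriorPower_two) hx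

theorem dualLefschetz_eta_mul {k : ℕ} {x : ExteriorAlgebra ℂ (VS N)}
    (hx : x ∈ ⋀[ℂ]^k (VS N)) :
    dualLefschetz N (eta N * x) = eta N * dualLefschetz N x + ((N : ℂ) - k) • x := by
  have heuler := sum_ι_single_mul_contractLeft_proj hx
  rw [Fintype.sum_sum_type] at heuler
  simp only [eta, Finset.sum_mul, mul_assoc, dualLefschetz_apply, map_sum,
    contractLeft_contractLeft_ι_mul_ι_mul]
  -- `αⱼ*(αᵢ) = βⱼ*(βᵢ) = δᵢⱼ` and `αⱼ*(βᵢ) = βⱼ*(αᵢ) = 0`: only the diagonal terms survive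
  simp only [av, bv, LinearMap.coe_proj, Function.eval, Pi.single_apply, Sum.inl.injEq,
    Sum.inr.injEq, reduceCtorEq, if_false, mul_ite, mul_one, mul_zero, sub_zero, ite_smul,
    one_smul, zero_smul, add_zero, Finset.sum_add_distrib, Finset.sum_sub_distrib,
    Finset.sum_ite_eq', Finset.mem_univ, if_true, ← Finset.mul_sum, Finset.sum_const,
    Finset.card_univ, Fintype.card_fin]
  rw [sub_smul, Nat.cast_smul_eq_nsmul, Nat.cast_smul_eq_nsmul, nsmul_eq_mul, ← heuler]
  abel

theorem dualLefschetz_eta_pow_succ_mul {k : ℕ} {x : ExteriorAlgebra ℂ (VS N)}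
    (hx : x ∈ ⋀[ℂ]^k (VS N)) (m : ℕ) :
    dualLefschetz N (eta N ^ (m + 1) * x) =
      eta N ^ (m + 1) * dualLefschetz N x + (((m : ℂ) + 1) * (N - k - m)) • (eta N ^ m * x) := by
  induction m with
  | zero => simp [dualLefschetz_eta_mul hx]
  | succ m ih =>
    rw [pow_succ', mul_assoc, dualLefschetz_eta_mul (eta_pow_mul_mem_exteriorPower _ hx), ih,
      mul_add, mul_smul_comm, ← mul_assoc, ← pow_succ', ← mul_assoc, ← pow_succ', add_assoc,
      ← add_smul]
    congr 2
    push_cast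
    ring

theorem eq_zero_of_eta_pow_mul_eq_zero {k m : ℕ} (hkm : k + m ≤ N)
    {x : ExteriorAlgebra ℂ (VS N)} (hx : x ∈ ⋀[ℂ]^k (VS N)) (h : eta N ^ m * x = 0) : x = 0 := by
  induction k using Nat.strong_induction_on generalizing m x with
  | _ k ihk =>
  induction m with
  | zero => simpa using h
  | succ m ihm =>
    have hcomm := dualLefschetz_eta_pow_succ_mul hx m
    have hΛ : dualLefschetz N x = 0 := by
      rcases le_or_gt k 1 with hk | hk
      · exact dualLefschetz_eq_zero_of_le_one hk hx
      refine ihk (k - 2) (by omega) (by omega : k - 2 + (m + 2) ≤ N)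
        (dualLefschetz_mem_exteriorPower hx) ?_
      have := congrArg (eta N * ·) hcomm
      simp only [h, map_zero, mul_zero, mul_add, mul_smul_comm, ← mul_assoc, ← pow_succ',
        smul_zero, add_zero] at this
      exact this.symm
    rw [h, map_zero, hΛ, mul_zero, zero_add, eq_comm, smul_eq_zero] at hcomm
    refine ihm (by omega) (hcomm.resolve_left ?_)
    have hm : (m : ℂ) + 1 ≠ 0 := by exact_mod_cast m.succ_ne_zero
    have hNkm : (N : ℂ) - k - m ≠ 0 := by
      rw [sub_sub, sub_ne_zero]
      exact_mod_cast (by omega : N ≠ k + m)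
    exact mul_ne_zero hm hNkm

end

/-- Symplectic Lefschetz injectivity on exterior powers: for every
`N ≥ 1` and every `k` with `0 ≤ k ≤ N−1`, the linear map `ΛᵏV_N → Λ^{k+2}V_N`,
`v ↦ η_N ∧ v`, is injective. -/
theorem lefschetz_injective (N k : ℕ) (hN : 1 ≤ N) (hk : k ≤ N - 1) :
    ∀ v ∈ EPfin N k, eta N * v = 0 → v = 0 := by
  intro v hv h
  rw [EPfin, ιMulti_span_fixedDegree] at hv
  exact eq_zero_of_eta_pow_mul_eq_zero (m := 1) (by omega) hv (by rwa [pow_one])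

end
end

section
/- sl₂-type lowering isomorphism between opposite-charge Fock sectors: for every integer m ≥ 0, the m-th power ω^m : F_m → F_{−m} is a linear isomorphism. -/
open scoped BigOperators

noncomputable section

/-!
Together with the raising operator `σ`, which moves a mode from the `a`-factor to the
`b`-factor, `ω` forms an `sl₂`-triple `(charge, σ, ω)`: `⁅σ, ω⁆` is the charge operator and `σ`,
`ω` shift the charge by `±2`. Both preserve the set `R ∪ S` of occupied modes of a basis vector,
so every vector lies in a finite-dimensional invariant piece, on which `σ` and `ω` are nilpotent.

For an `sl₂`-triple `(h, e, f)` and an `h`-eigenvector `v` of weight `μ ∈ ℕ` on which `e` is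
nilpotent, `f^k v = 0` with `k ≤ μ` forces `v = 0`: induct on the nilpotency order of `e`, using
`e f^(k+1) = f^(k+1) e + (k+1) f^k (h - k)`. Hence `ω^m` is injective on `F_m` and, applied to
the triple `(-h, f, e)`, `σ^m` is injective on `F_{-m}`; on the finite-dimensional pieces these
two injections force `ω^m` to be bijective.
-/

namespace IsSl2Triple

attribute [local instance] LieRing.ofAssociativeRing

section CommRing

variable {K V : Type*} [CommRing K] [AddCommGroup V] [Module K V] {h e f : Module.End K V}

lemma e_apply_f_apply (t : IsSl2Triple h e f) (v : V) : e (f v) = f (e v) + h v := by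
  have := congr($(t.lie_e_f) v)
  rw [Ring.lie_def, LinearMap.sub_apply, Module.End.mul_apply, Module.End.mul_apply] at this
  exact sub_eq_iff_eq_add'.mp this

lemma h_apply_e_apply (t : IsSl2Triple h e f) (v : V) : h (e v) = e (h v) + (2 : K) • e v := by
  have := congr($(t.lie_h_e_smul K) v)
  rw [Ring.lie_def, LinearMap.sub_apply, Module.End.mul_apply, Module.End.mul_apply,
    LinearMap.smul_apply] at this
  exact sub_eq_iff_eq_add'.mp this

lemma h_apply_f_apply (t : IsSl2Triple h e f) (v : V) : h (f v) = f (h v) - (2 : K) • f v := by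
  have := congr($(t.lie_lie_smul_f K) v)
  rw [Ring.lie_def, LinearMap.sub_apply, Module.End.mul_apply, Module.End.mul_apply,
    LinearMap.neg_apply, LinearMap.smul_apply] at this
  rw [sub_eq_add_neg]
  exact sub_eq_iff_eq_add'.mp this

lemma h_apply_pow_f_apply (t : IsSl2Triple h e f) {v : V} {μ : K} (hv : h v = μ • v) (k : ℕ) :
    h ((f ^ k) v) = (μ - 2 * k) • (f ^ k) v := by
  induction k with
  | zero => simpa using hv
  | succ k ih =>
    rw [pow_succ', Module.End.mul_apply, h_apply_f_apply t, ih, map_smul, ← sub_smul]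
    push_cast
    ring_nf

lemma e_apply_pow_succ_f_apply (t : IsSl2Triple h e f) {v : V} {μ : K} (hv : h v = μ • v)
    (k : ℕ) :
    e ((f ^ (k + 1)) v) = (f ^ (k + 1)) (e v) + ((k + 1) * (μ - k)) • (f ^ k) v := by
  induction k with
  | zero => simp [e_apply_f_apply t, hv]
  | succ k ih =>
    rw [pow_succ' f (k + 1), Module.End.mul_apply, e_apply_f_apply t, ih, h_apply_pow_f_apply t hv,
      map_add, map_smul, add_assoc]
    simp only [pow_succ' f, Module.End.mul_apply, ← add_smul]
    congr 2
    push_cast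
    ring

end CommRing

variable {K V : Type*} [Field K] [CharZero K] [AddCommGroup V] [Module K V]
  {h e f : Module.End K V}

lemma eq_zero_of_pow_f_apply_eq_zero_of_e_apply_eq_zero (t : IsSl2Triple h e f) {v : V} {μ : ℕ}
    (hv : h v = (μ : K) • v) (he : e v = 0) {k : ℕ} (hk : k ≤ μ) (hf : (f ^ k) v = 0) :
    v = 0 := by
  induction k with
  | zero => simpa using hf
  | succ k ih =>
    refine ih (by omega) ?_
    have hcoeff : ((k + 1) * (μ - k) : K) ≠ 0 :=
      mul_ne_zero (Nat.cast_add_one_ne_zero k) (sub_ne_zero.mpr (by norm_cast; omega))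
    have := e_apply_pow_succ_f_apply t hv k
    rw [hf, he, map_zero, map_zero, zero_add, eq_comm, smul_eq_zero] at this
    exact this.resolve_left hcoeff

lemma eq_zero_of_pow_f_apply_eq_zero (t : IsSl2Triple h e f) {n : ℕ} {v : V} {μ : ℕ}
    (hv : h v = (μ : K) • v) (he : (e ^ n) v = 0) {k : ℕ} (hk : k ≤ μ) (hf : (f ^ k) v = 0) :
    v = 0 := by
  induction n generalizing v μ k with
  | zero => simpa using he
  | succ n ih =>
    obtain _ | j := k
    · simpa using hf
    have hev : h (e v) = ((μ + 2 : ℕ) : K) • e v := by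
      rw [h_apply_e_apply t, hv, map_smul, ← add_smul]
      push_cast
      ring_nf
    have hfev : (f ^ (j + 2)) (e v) = 0 := by
      have := e_apply_pow_succ_f_apply t hv j
      rw [hf, map_zero, eq_comm, add_eq_zero_iff_eq_neg] at this
      rw [pow_succ', Module.End.mul_apply, this, map_neg, map_smul, ← Module.End.mul_apply,
        ← pow_succ', hf, smul_zero, neg_zero]
    have he' : e v = 0 :=
      ih hev (by rwa [← Module.End.mul_apply, ← pow_succ]) (by omega) hfev
    exact t.eq_zero_of_pow_f_apply_eq_zero_of_e_apply_eq_zero hv he' hk hf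

end IsSl2Triple

lemma LinearMap.exists_apply_eq_of_disjoint_ker {K V W : Type*} [Field K] [AddCommGroup V]
    [Module K V] [AddCommGroup W] [Module K W] {f : V →ₗ[K] W} {g : W →ₗ[K] V}
    {P : Submodule K V} {Q : Submodule K W} [FiniteDimensional K P] [FiniteDimensional K Q]
    (hf : ∀ v ∈ P, f v ∈ Q) (hg : ∀ w ∈ Q, g w ∈ P)
    (hf_inj : Disjoint P (ker f)) (hg_inj : Disjoint Q (ker g))
    {w : W} (hw : w ∈ Q) : ∃ v ∈ P, f v = w := by
  have hf' := (f.injective_restrict_iff hf).mpr hf_inj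
  have hrank := (LinearMap.finrank_le_finrank_of_injective hf').antisymm
    (LinearMap.finrank_le_finrank_of_injective ((g.injective_restrict_iff hg).mpr hg_inj))
  obtain ⟨v, hv⟩ := (LinearMap.injective_iff_surjective_of_finrank_eq_finrank hrank).mp hf' ⟨w, hw⟩
  exact ⟨v, v.2, congr($hv.1)⟩

open Finset

lemma neg_one_pow_eq_of_mod_two_eq {R : Type*} [Ring R] {a b : ℕ}
    (h : a % 2 = b % 2) : (-1 : R) ^ a = (-1) ^ b := by
  rw [neg_one_pow_eq_pow_mod_two, h, ← neg_one_pow_eq_pow_mod_two]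

def omegaSign (x : FockIdx) (k : ℕ) : ℂ :=
  (-1) ^ ((x.1.filter (· < k)).card + (x.2.filter (· < k)).card + (x.1.erase k).card)

def raisingSign (x : FockIdx) (k : ℕ) : ℂ :=
  (-1) ^ ((x.1.filter (· < k)).card + (x.2.filter (· < k)).card + x.1.card)

/-- The raising partner `σ` of `ω`: it moves a mode from the `a`-factor to the `b`-factor, with
the signs that make `⁅σ, ω⁆` the charge operator. -/
def raising : Fock →ₗ[ℂ] Fock :=
  Finsupp.lsum ℂ fun x => LinearMap.toSpanSingleton ℂ Fock
    (∑ k ∈ x.2 \ x.1, raisingSign x k • fsingle (insert k x.1, x.2.erase k))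

def chargeOp : Fock →ₗ[ℂ] Fock :=
  Finsupp.lsum ℂ fun x => LinearMap.toSpanSingleton ℂ Fock ((charge x : ℂ) • fsingle x)

lemma raising_single (x : FockIdx) :
    raising (fsingle x) =
      ∑ k ∈ x.2 \ x.1, raisingSign x k • fsingle (insert k x.1, x.2.erase k) := by
  rw [raising, fsingle, Finsupp.lsum_single, LinearMap.toSpanSingleton_apply_one]

lemma chargeOp_single (x : FockIdx) : chargeOp (fsingle x) = (charge x : ℂ) • fsingle x := by
  rw [chargeOp, fsingle, Finsupp.lsum_single, LinearMap.toSpanSingleton_apply_one, fsingle]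

lemma omega_single (x : FockIdx) :
    omega (fsingle x) = ∑ k ∈ x.1 \ x.2, omegaSign x k • fsingle (x.1.erase k, insert k x.2) := by
  rw [omega, fsingle, Finsupp.lsum_single, LinearMap.toSpanSingleton_apply_one,
    sdiff_eq_filter, sum_filter]
  refine sum_congr rfl fun k hk => ?_
  simp only [beta, alpha, fsingle, Finsupp.lsum_single, LinearMap.toSpanSingleton_apply_one,
    if_pos hk, map_smul]
  split_ifs with h2
  · rw [smul_zero]
  · rw [smul_smul, omegaSign, pow_add, pow_add]
    ring_nf

lemma card_filter_erase_add {s : Finset ℕ} {l : ℕ} (k : ℕ) (hl : l ∈ s) :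
    ((s.erase l).filter (· < k)).card + (if l < k then 1 else 0) = (s.filter (· < k)).card := by
  rw [filter_erase]
  split_ifs with h
  · exact card_erase_add_one (mem_filter.mpr ⟨hl, h⟩)
  · rw [add_zero, erase_eq_of_notMem (s := s.filter (· < k)) fun hc => h (mem_filter.mp hc).2]

lemma card_filter_insert {s : Finset ℕ} {l : ℕ} (k : ℕ) (hl : l ∉ s) :
    ((insert l s).filter (· < k)).card = (s.filter (· < k)).card + (if l < k then 1 else 0) := by
  rw [filter_insert]
  split_ifs with h
  · rw [card_insert_of_notMem fun hc => hl (mem_filter.mp hc).1]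
  · rw [add_zero]

lemma omegaSign_mul_raisingSign {R S : Finset ℕ} {l : ℕ} (hlR : l ∈ R) (hlS : l ∉ S) :
    omegaSign (R, S) l * raisingSign (R.erase l, insert l S) l = 1 := by
  have h1 := card_filter_erase_add l hlR
  have h2 := card_filter_insert l hlS
  rw [if_neg (lt_irrefl l), add_zero] at h1 h2
  rw [omegaSign, raisingSign, ← pow_add,
    neg_one_pow_eq_of_mod_two_eq (b := 0) (by dsimp only; omega), pow_zero]

lemma raisingSign_mul_omegaSign {R S : Finset ℕ} {k : ℕ} (hkS : k ∈ S) (hkR : k ∉ R) :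
    raisingSign (R, S) k * omegaSign (insert k R, S.erase k) k = 1 := by
  have h1 := card_filter_insert k hkR
  have h2 := card_filter_erase_add k hkS
  rw [if_neg (lt_irrefl k), add_zero] at h1 h2
  rw [omegaSign, raisingSign, erase_insert hkR, ← pow_add,
    neg_one_pow_eq_of_mod_two_eq (b := 0) (by dsimp only; omega), pow_zero]

lemma omegaSign_mul_raisingSign_comm {R S : Finset ℕ} {l k : ℕ} (hlR : l ∈ R) (hlS : l ∉ S)
    (hkS : k ∈ S) (hkR : k ∉ R) :
    omegaSign (R, S) l * raisingSign (R.erase l, insert l S) k =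
      raisingSign (R, S) k * omegaSign (insert k R, S.erase k) l := by
  have f1 := card_filter_erase_add k hlR
  have f2 := card_filter_insert k hlS
  have f3 := card_erase_add_one hlR
  have f4 := card_filter_insert l hkR
  have f5 := card_filter_erase_add l hkS
  have f6 : ((insert k R).erase l).card + 1 = R.card + 1 := by
    rw [card_erase_add_one (mem_insert_of_mem hlR), card_insert_of_notMem hkR]
  rw [omegaSign, raisingSign, omegaSign, raisingSign, ← pow_add, ← pow_add]
  apply neg_one_pow_eq_of_mod_two_eq
  dsimp only
  have hlk : l ≠ k := fun h => hkR (h ▸ hlR)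
  rcases lt_or_gt_of_ne hlk with h | h
  · rw [if_pos h] at f1 f2
    rw [if_neg (by omega)] at f4 f5
    omega
  · rw [if_neg (by omega)] at f1 f2
    rw [if_pos h] at f4 f5
    omega

lemma charge_eq_card_sdiff_sub (R S : Finset ℕ) :
    charge (R, S) = ((R \ S).card : ℤ) - (S \ R).card := by
  have h1 := card_sdiff_add_card_inter R S
  have h2 := card_sdiff_add_card_inter S R
  rw [inter_comm] at h2
  unfold charge
  dsimp only
  omega

lemma raising_omega_single (R S : Finset ℕ) :
    raising (omega (fsingle (R, S))) = ((R \ S).card : ℂ) • fsingle (R, S) +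
      ∑ l ∈ R \ S, ∑ k ∈ S \ R, (omegaSign (R, S) l * raisingSign (R.erase l, insert l S) k) •
        fsingle (insert k (R.erase l), insert l (S.erase k)) := by
  rw [omega_single, map_sum, Nat.cast_smul_eq_nsmul, ← sum_const, ← sum_add_distrib]
  refine sum_congr rfl fun l hl => ?_
  obtain ⟨hlR, hlS⟩ := mem_sdiff.mp hl
  have hsdiff : insert l S \ R.erase l = insert l (S \ R) := by
    ext a
    by_cases ha : a = l <;> simp [ha, hlR, hlS]
  rw [map_smul, raising_single, hsdiff, sum_insert (by simp [hlS]), smul_add, smul_sum]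
  congr 1
  · rw [insert_erase hlR, erase_insert hlS, smul_smul, omegaSign_mul_raisingSign hlR hlS, one_smul]
  · refine sum_congr rfl fun k hk => ?_
    have hlk : l ≠ k := fun h => (mem_sdiff.mp hk).2 (h ▸ hlR)
    rw [smul_smul, erase_insert_of_ne hlk]

lemma omega_raising_single (R S : Finset ℕ) :
    omega (raising (fsingle (R, S))) = ((S \ R).card : ℂ) • fsingle (R, S) +
      ∑ k ∈ S \ R, ∑ l ∈ R \ S, (raisingSign (R, S) k * omegaSign (insert k R, S.erase k) l) •
        fsingle ((insert k R).erase l, insert l (S.erase k)) := by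
  rw [raising_single, map_sum, Nat.cast_smul_eq_nsmul, ← sum_const, ← sum_add_distrib]
  refine sum_congr rfl fun k hk => ?_
  obtain ⟨hkS, hkR⟩ := mem_sdiff.mp hk
  have hsdiff : insert k R \ S.erase k = insert k (R \ S) := by
    ext a
    by_cases ha : a = k <;> simp [ha, hkS, hkR]
  rw [map_smul, omega_single, hsdiff, sum_insert (by simp [hkR]), smul_add, smul_sum]
  congr 1
  · rw [erase_insert hkR, insert_erase hkS, smul_smul, raisingSign_mul_omegaSign hkS hkR, one_smul]
  · exact sum_congr rfl fun l _ => smul_smul _ _ _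

lemma raising_omega_sub_omega_raising : raising * omega - omega * raising = chargeOp := by
  ext ⟨R, S⟩ : 2
  change raising (omega (fsingle (R, S))) - omega (raising (fsingle (R, S))) =
    chargeOp (fsingle (R, S))
  have hcross : ∑ l ∈ R \ S, ∑ k ∈ S \ R,
      (omegaSign (R, S) l * raisingSign (R.erase l, insert l S) k) •
        fsingle (insert k (R.erase l), insert l (S.erase k)) =
      ∑ k ∈ S \ R, ∑ l ∈ R \ S, (raisingSign (R, S) k * omegaSign (insert k R, S.erase k) l) •
        fsingle ((insert k R).erase l, insert l (S.erase k)) := by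
    rw [sum_comm]
    refine sum_congr rfl fun k hk => sum_congr rfl fun l hl => ?_
    obtain ⟨hkS, hkR⟩ := mem_sdiff.mp hk
    obtain ⟨hlR, hlS⟩ := mem_sdiff.mp hl
    have hkl : k ≠ l := fun h => hlS (h ▸ hkS)
    rw [omegaSign_mul_raisingSign_comm hlR hlS hkS hkR, erase_insert_of_ne hkl]
  rw [raising_omega_single, omega_raising_single, hcross, add_sub_add_right_eq_sub, ← sub_smul,
    chargeOp_single, charge_eq_card_sdiff_sub]
  push_cast
  rfl

def sector (modes : Finset (Finset ℕ)) (c : ℤ) : Submodule ℂ Fock :=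
  Finsupp.supported ℂ ℂ {y | y.1 ∪ y.2 ∈ modes ∧ charge y = c}

instance (modes : Finset (Finset ℕ)) (c : ℤ) : FiniteDimensional ℂ (sector modes c) := by
  have hfin : {y : FockIdx | y.1 ∪ y.2 ∈ modes ∧ charge y = c}.Finite := by
    refine (modes.biUnion fun U => U.powerset ×ˢ U.powerset).finite_toSet.subset fun _ hy => ?_
    simp only [coe_biUnion, coe_product, coe_powerset, Set.mem_iUnion]
    exact ⟨_, hy.1, subset_union_left, subset_union_right⟩
  rw [sector, Finsupp.supported_eq_span_single]
  exact FiniteDimensional.span_of_finite ℂ (hfin.image _)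

lemma sector_le_FockC (modes : Finset (Finset ℕ)) (c : ℤ) : sector modes c ≤ FockC c :=
  Finsupp.supported_mono fun _ hy => hy.2

lemma exists_mem_sector {c : ℤ} {v : Fock} (hv : v ∈ FockC c) :
    ∃ modes : Finset (Finset ℕ), v ∈ sector modes c :=
  ⟨v.support.image fun y => y.1 ∪ y.2, fun _ hy => ⟨mem_image_of_mem _ hy, hv hy⟩⟩

lemma abs_charge_le_card_union (y : FockIdx) : |charge y| ≤ (y.1 ∪ y.2).card := by
  have h1 := card_le_card (subset_union_left (s₁ := y.1) (s₂ := y.2))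
  have h2 := card_le_card (subset_union_right (s₁ := y.1) (s₂ := y.2))
  rw [charge, abs_le]
  omega

lemma eq_zero_of_mem_sector {modes : Finset (Finset ℕ)} {c : ℤ}
    (hc : ∀ U ∈ modes, (U.card : ℤ) < |c|) {v : Fock} (hv : v ∈ sector modes c) : v = 0 := by
  rw [← Finsupp.support_eq_empty, ← coe_eq_empty, Set.eq_empty_iff_forall_notMem]
  rintro y hy
  obtain ⟨hyU, rfl⟩ := hv hy
  exact (hc _ hyU).not_ge (abs_charge_le_card_union y)

lemma chargeOp_of_mem_FockC {c : ℤ} {v : Fock} (hv : v ∈ FockC c) : chargeOp v = (c : ℂ) • v := by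
  suffices FockC c ≤ LinearMap.eqLocus chargeOp ((c : ℂ) • LinearMap.id) from this hv
  rw [FockC, Finsupp.supported_eq_span_single, Submodule.span_le]
  rintro _ ⟨x, hx, rfl⟩
  obtain rfl : charge x = c := hx
  exact chargeOp_single x

def ShiftsCharge (L : Module.End ℂ Fock) (d : ℤ) : Prop :=
  ∀ x : FockIdx, L (fsingle x) ∈ sector {x.1 ∪ x.2} (charge x + d)

namespace ShiftsCharge

variable {L : Module.End ℂ Fock} {d : ℤ}

lemma apply_mem_sector (hL : ShiftsCharge L d) {modes : Finset (Finset ℕ)} {c : ℤ} {v : Fock}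
    (hv : v ∈ sector modes c) : L v ∈ sector modes (c + d) := by
  suffices sector modes c ≤ (sector modes (c + d)).comap L from this hv
  rw [sector, Finsupp.supported_eq_span_single, Submodule.span_le]
  rintro _ ⟨x, ⟨hxU, rfl⟩, rfl⟩
  refine Finsupp.supported_mono ?_ (hL x)
  rintro y ⟨hy, hc⟩
  exact ⟨mem_singleton.mp hy ▸ hxU, hc⟩

lemma pow_apply_mem_sector (hL : ShiftsCharge L d) (n : ℕ) {modes : Finset (Finset ℕ)} {c : ℤ}
    {v : Fock} (hv : v ∈ sector modes c) : (L ^ n) v ∈ sector modes (c + n * d) := by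
  induction n with
  | zero => simpa using hv
  | succ n ih =>
    rw [pow_succ', Module.End.mul_apply]
    convert hL.apply_mem_sector ih using 2
    push_cast
    ring

lemma exists_pow_apply_eq_zero (hL : ShiftsCharge L d) (hd : d ≠ 0) {modes : Finset (Finset ℕ)}
    {c : ℤ} {v : Fock} (hv : v ∈ sector modes c) : ∃ n : ℕ, (L ^ n) v = 0 := by
  set n := modes.sup card + c.natAbs + 1
  refine ⟨n, eq_zero_of_mem_sector (fun U hU => ?_) (hL.pow_apply_mem_sector n hv)⟩
  have hU : (U.card : ℤ) ≤ modes.sup card := by exact_mod_cast le_sup hU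
  have hn : (n : ℤ) ≤ |n * d| := by
    rw [abs_mul, Nat.abs_cast]
    exact le_mul_of_one_le_right (Nat.cast_nonneg n) (Int.one_le_abs hd)
  have hsub := abs_sub (c + n * d) c
  rw [add_sub_cancel_left] at hsub
  have hc : |c| = c.natAbs := Int.abs_eq_natAbs c
  push_cast [n] at hn hsub ⊢
  linarith

lemma chargeOp_mul_sub (hL : ShiftsCharge L d) : chargeOp * L - L * chargeOp = (d : ℂ) • L := by
  ext x : 2
  change chargeOp (L (fsingle x)) - L (chargeOp (fsingle x)) = (d : ℂ) • L (fsingle x)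
  rw [chargeOp_of_mem_FockC (sector_le_FockC _ _ (hL x)), chargeOp_single, map_smul, ← sub_smul]
  push_cast
  ring_nf

end ShiftsCharge

lemma raising_shiftsCharge : ShiftsCharge raising 2 := by
  intro x
  rw [raising_single]
  refine Submodule.sum_mem _ fun k hk =>
    Submodule.smul_mem _ _ (Finsupp.single_mem_supported ℂ _ ?_)
  obtain ⟨hk2, hk1⟩ := mem_sdiff.mp hk
  refine ⟨mem_singleton.mpr ?_, ?_⟩
  · ext a
    by_cases ha : a = k <;> simp [ha, hk2]
  · have := card_erase_add_one hk2
    simp only [charge, card_insert_of_notMem hk1]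
    omega

lemma omega_shiftsCharge : ShiftsCharge omega (-2) := by
  intro x
  rw [omega_single]
  refine Submodule.sum_mem _ fun k hk =>
    Submodule.smul_mem _ _ (Finsupp.single_mem_supported ℂ _ ?_)
  obtain ⟨hk1, hk2⟩ := mem_sdiff.mp hk
  refine ⟨mem_singleton.mpr ?_, ?_⟩
  · ext a
    by_cases ha : a = k <;> simp [ha, hk1]
  · have := card_erase_add_one hk1
    simp only [charge, card_insert_of_notMem hk2]
    omega

section Sl2Triple

attribute [local instance] LieRing.ofAssociativeRing

lemma isSl2Triple_chargeOp_raising_omega : IsSl2Triple chargeOp raising omega where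
  h_ne_zero h0 := by
    have := congr($h0 (fsingle ({0}, ∅)))
    rw [chargeOp_single, LinearMap.zero_apply] at this
    simp [charge, fsingle] at this
  lie_e_f := raising_omega_sub_omega_raising
  lie_h_e_nsmul := by
    rw [Ring.lie_def, raising_shiftsCharge.chargeOp_mul_sub]
    module
  lie_h_f_nsmul := by
    rw [Ring.lie_def, omega_shiftsCharge.chargeOp_mul_sub]
    module

lemma disjoint_sector_ker_omega_pow (modes : Finset (Finset ℕ)) (m : ℕ) :
    Disjoint (sector modes m) (LinearMap.ker (omega ^ m)) := by
  refine Submodule.disjoint_def.mpr fun v hv hker => ?_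
  obtain ⟨n, hn⟩ := raising_shiftsCharge.exists_pow_apply_eq_zero two_ne_zero hv
  refine isSl2Triple_chargeOp_raising_omega.eq_zero_of_pow_f_apply_eq_zero ?_ hn le_rfl hker
  rw [chargeOp_of_mem_FockC (sector_le_FockC _ _ hv), Int.cast_natCast]

lemma disjoint_sector_ker_raising_pow (modes : Finset (Finset ℕ)) (m : ℕ) :
    Disjoint (sector modes (-m)) (LinearMap.ker (raising ^ m)) := by
  refine Submodule.disjoint_def.mpr fun u hu hker => ?_
  obtain ⟨n, hn⟩ := omega_shiftsCharge.exists_pow_apply_eq_zero (by norm_num) hu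
  refine isSl2Triple_chargeOp_raising_omega.symm.eq_zero_of_pow_f_apply_eq_zero ?_ hn le_rfl hker
  rw [LinearMap.neg_apply, chargeOp_of_mem_FockC (sector_le_FockC _ _ hu), Int.cast_neg,
    Int.cast_natCast, neg_smul, neg_neg]

end Sl2Triple

lemma omega_pow_apply_mem_sector {modes : Finset (Finset ℕ)} {m : ℕ} {v : Fock}
    (hv : v ∈ sector modes m) : (omega ^ m) v ∈ sector modes (-m) := by
  convert omega_shiftsCharge.pow_apply_mem_sector m hv using 2
  ring

lemma raising_pow_apply_mem_sector {modes : Finset (Finset ℕ)} {m : ℕ} {u : Fock}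
    (hu : u ∈ sector modes (-m)) : (raising ^ m) u ∈ sector modes m := by
  convert raising_shiftsCharge.pow_apply_mem_sector m hu using 2
  ring

/-- `sl₂`-type lowering isomorphism between opposite-charge Fock
sectors: for every integer `m ≥ 0`, the `m`-th power `ω^m : F_m → F_{−m}` is a linear
isomorphism (stated as: injective on `F_m` and surjective onto `F_{−m}`; note
`ω^m(F_m) ⊆ F_{−m}`). -/
theorem omega_power_iso (m : ℕ) :
    (∀ v ∈ FockC m, (omega ^ m) v = 0 → v = 0) ∧
    (∀ u ∈ FockC (-(m : ℤ)), ∃ v ∈ FockC m, (omega ^ m) v = u) := by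
  refine ⟨fun v hv hωv => ?_, fun u hu => ?_⟩
  · obtain ⟨modes, hvs⟩ := exists_mem_sector hv
    exact Submodule.disjoint_def.mp (disjoint_sector_ker_omega_pow modes m) v hvs hωv
  · obtain ⟨modes, hus⟩ := exists_mem_sector hu
    obtain ⟨v, hvs, rfl⟩ := LinearMap.exists_apply_eq_of_disjoint_ker
      (fun _ ↦ omega_pow_apply_mem_sector) (fun _ ↦ raising_pow_apply_mem_sector)
      (disjoint_sector_ker_omega_pow modes m) (disjoint_sector_ker_raising_pow modes m) hus
    exact ⟨v, sector_le_FockC _ _ hvs, rfl⟩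

end
end
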